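/- arXiv:2011.02360 — 9 statements merged into one kernel-verified Lean document; each statement's English description precedes it below -/
import Mathlib

section
/- Let w : [0,1) → [0,∞) be a continuous function with ∫_0^1 w(ξ) dξ = 1. For each n ≥ 2, let c_{n,1}, …, c_{n,n} be nonnegative reals with (1/n)·(c_{n,1} + ⋯ + c_{n,n}) = 1, and define the step function w_n on (0,1] by w_n(ξ) = c_{n,k} for (k-1)/n < ξ ≤ k/n. Assume that for every ξ* ∈ (0,1), lim_{n→∞} sup_{1 ≤ k ≤ n ξ*} |c_{n,k} - w(k/n)| = 0. Then lim_{n→∞} ∫_0^1 |w_n(ξ) - w(ξ)| dξ = 0. -/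
/-!
Fix `b < 1`. A point of `(0, ⌊b n⌋ / n]` lies in a cell `((k - 1)/n, k/n]` with `k ≤ n b`, so there
`|w_n - w| ≤ |c_{n,k} - w(k/n)| + |w(k/n) - w(ξ)|` is uniformly small, by the hypothesis on the
coefficients and the uniform continuity of `w` on `[0, b]`. Since `w_n` and `w` are nonnegative with
the same total mass, the `L¹` distance on the rest of `(0, 1)` is at most the distance on the bulk
plus twice the mass of `w` outside it, and that mass is small for `b` close to `1`.
-/

open MeasureTheory Filter Set Topology

theorem integral_abs_sub_le_of_integral_eq {α : Type*} [MeasurableSpace α] {μ : Measure α}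
    {f g : α → ℝ} {s t : Set α} (ht : MeasurableSet t) (hts : t ⊆ s)
    (hf : IntegrableOn f s μ) (hg : IntegrableOn g s μ)
    (hf0 : 0 ≤ᵐ[μ.restrict s] f) (hg0 : 0 ≤ᵐ[μ.restrict s] g)
    (heq : ∫ x in s, f x ∂μ = ∫ x in s, g x ∂μ) :
    ∫ x in s, |f x - g x| ∂μ ≤
      2 * ∫ x in t, |f x - g x| ∂μ + 2 * ∫ x in s \ t, g x ∂μ := by
  have hd : IntegrableOn (fun x => |f x - g x|) s μ := (hf.sub hg).abs
  have h_split : ∀ {h : α → ℝ}, IntegrableOn h s μ →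
      ∫ x in s, h x ∂μ = ∫ x in t, h x ∂μ + ∫ x in s \ t, h x ∂μ := fun hh => by
    rw [← integral_inter_add_sdiff ht hh, inter_eq_right.2 hts]
  have h_tail :
      ∫ x in s \ t, |f x - g x| ∂μ ≤ ∫ x in s \ t, f x ∂μ + ∫ x in s \ t, g x ∂μ := by
    rw [← integral_add (hf.mono_set sdiff_subset) (hg.mono_set sdiff_subset)]
    refine integral_mono_ae (hd.mono_set sdiff_subset) ((hf.add hg).mono_set sdiff_subset) ?_
    filter_upwards [ae_restrict_of_ae_restrict_of_subset sdiff_subset hf0,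
      ae_restrict_of_ae_restrict_of_subset sdiff_subset hg0] with x hfx hgx
    exact abs_sub_le_of_nonneg_of_le hfx (le_add_of_nonneg_right hgx) hgx
      (le_add_of_nonneg_left hfx)
  have h_bulk : ∫ x in t, g x ∂μ - ∫ x in t, f x ∂μ ≤ ∫ x in t, |f x - g x| ∂μ := by
    rw [← integral_sub (hg.mono_set hts) (hf.mono_set hts)]
    exact integral_mono (hg.sub hf |>.mono_set hts) (hd.mono_set hts)
      fun x => (abs_sub_comm (f x) (g x)).symm ▸ le_abs_self _
  linarith [h_split hf, h_split hg, h_split hd]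

theorem norm_setIntegral_le_of_measure_le_one {α : Type*} [MeasurableSpace α] {μ : Measure α}
    {F : α → ℝ} {t : Set α} {C : ℝ} (ht : μ t ≤ 1) (hF : ∀ x ∈ t, ‖F x‖ ≤ C) (hC : 0 ≤ C) :
    ‖∫ x in t, F x ∂μ‖ ≤ C :=
  (norm_setIntegral_le_of_norm_le_const (ht.trans_lt ENNReal.one_lt_top) hF).trans
    (mul_le_of_le_one_right hC (ENNReal.toReal_le_of_le_ofReal zero_le_one
      (ht.trans ENNReal.ofReal_one.ge)))

theorem exists_mem_Icc_mem_Ioc_div {n : ℕ} (hn : 0 < n) {m : ℕ} {ξ : ℝ}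
    (hξ : ξ ∈ Ioc 0 ((m : ℝ) / n)) :
    ∃ k ∈ Finset.Icc 1 m, ξ ∈ Ioc (((k : ℝ) - 1) / n) ((k : ℝ) / n) := by
  have hn' : (0 : ℝ) < n := Nat.cast_pos.2 hn
  have hnξ : 0 < n * ξ := mul_pos hn' hξ.1
  refine ⟨⌈n * ξ⌉₊, Finset.mem_Icc.2 ⟨Nat.one_le_ceil_iff.2 hnξ, ?_⟩, ?_, ?_⟩
  · exact Nat.ceil_le.2 (by rw [mul_comm, ← le_div_iff₀ hn']; exact hξ.2)
  · rw [div_lt_iff₀ hn', sub_lt_iff_lt_add, mul_comm ξ]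
    exact Nat.ceil_lt_add_one hnξ.le
  · rw [le_div_iff₀ hn', mul_comm]
    exact Nat.le_ceil _

theorem nonneg_of_eqOn_cells {f : ℝ → ℝ} {n : ℕ} {c : ℕ → ℝ} (hn : 0 < n)
    (hf : ∀ k ∈ Finset.Icc 1 n, ∀ ξ ∈ Ioc (((k : ℝ) - 1) / n) ((k : ℝ) / n), f ξ = c k)
    (hc : ∀ k ∈ Finset.Icc 1 n, 0 ≤ c k) {ξ : ℝ} (hξ : ξ ∈ Ioc 0 1) : 0 ≤ f ξ := by
  obtain ⟨k, hk, hξk⟩ := exists_mem_Icc_mem_Ioc_div hn (m := n)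
    (by rwa [div_self (Nat.cast_ne_zero.2 hn.ne')])
  exact hf k hk ξ hξk ▸ hc k hk

theorem integrableOn_Ioc_and_integral_eq_of_eqOn_cells {f : ℝ → ℝ} {n : ℕ} {c : ℕ → ℝ}
    (m : ℕ)
    (hf : ∀ k ∈ Finset.Icc 1 m, ∀ ξ ∈ Ioc (((k : ℝ) - 1) / n) ((k : ℝ) / n), f ξ = c k) :
    IntegrableOn f (Ioc 0 ((m : ℝ) / n)) ∧
      ∫ ξ in Ioc 0 ((m : ℝ) / n), f ξ = (∑ k ∈ Finset.Icc 1 m, c k) / n := by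
  induction m with
  | zero => simp
  | succ m ih =>
    obtain ⟨ih_int, ih_eq⟩ :=
      ih fun k hk => hf k (Finset.Icc_subset_Icc_right m.le_succ hk)
    have h_cell :
        EqOn f (fun _ => c (m + 1)) (Ioc ((m : ℝ) / n) (((m + 1 : ℕ) : ℝ) / n)) := fun ξ hξ =>
      hf (m + 1) (Finset.mem_Icc.2 ⟨Nat.le_add_left 1 m, le_rfl⟩) ξ (by simpa using hξ)
    have h_cell_int : IntegrableOn f (Ioc ((m : ℝ) / n) (((m + 1 : ℕ) : ℝ) / n)) :=
      (integrableOn_const measure_Ioc_lt_top.ne).congr_fun h_cell.symm measurableSet_Ioc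
    have h_union : Ioc 0 (((m + 1 : ℕ) : ℝ) / n) =
        Ioc 0 ((m : ℝ) / n) ∪ Ioc ((m : ℝ) / n) (((m + 1 : ℕ) : ℝ) / n) :=
      (Ioc_union_Ioc_eq_Ioc (by positivity) (by gcongr; simp)).symm
    rw [h_union]
    refine ⟨ih_int.union h_cell_int, ?_⟩
    rw [setIntegral_union (Ioc_disjoint_Ioc_of_le le_rfl) measurableSet_Ioc ih_int h_cell_int,
      ih_eq, setIntegral_congr_fun measurableSet_Ioc h_cell, setIntegral_const,
      Real.volume_real_Ioc, Finset.sum_Icc_succ_top (Nat.le_add_left 1 m), Nat.cast_succ,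
      ← sub_div, add_sub_cancel_left, max_eq_left (by positivity), smul_eq_mul]
    ring

theorem integrableOn_Ioo_and_integral_eq_of_eqOn_cells {f : ℝ → ℝ} {n : ℕ} {c : ℕ → ℝ}
    (hn : n ≠ 0)
    (hf : ∀ k ∈ Finset.Icc 1 n, ∀ ξ ∈ Ioc (((k : ℝ) - 1) / n) ((k : ℝ) / n), f ξ = c k) :
    IntegrableOn f (Ioo 0 1) ∧ ∫ ξ in Ioo 0 1, f ξ = (∑ k ∈ Finset.Icc 1 n, c k) / n := by
  obtain ⟨h_int, h_eq⟩ := integrableOn_Ioc_and_integral_eq_of_eqOn_cells n hf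
  rw [div_self (Nat.cast_ne_zero.2 hn)] at h_int h_eq
  exact ⟨h_int.mono_set Ioo_subset_Ioc_self, by rwa [← integral_Ioc_eq_integral_Ioo]⟩

theorem tendsto_setIntegral_Ioo_nhdsLT {f : ℝ → ℝ} {a b : ℝ} (hab : a < b)
    (hf : IntegrableOn f (Ioo a b)) :
    Tendsto (fun x => ∫ y in Ioo x b, f y) (𝓝[<] b) (𝓝 0) := by
  have h_int : IntegrableOn f (uIcc a b) := by
    rwa [uIcc_of_le hab.le, integrableOn_Icc_iff_integrableOn_Ioo enorm_ne_top enorm_ne_top]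
  have h_cont : Tendsto (fun x => ∫ y in x..b, f y) (𝓝[uIcc a b] b) (𝓝 0) := by
    simpa using
      (intervalIntegral.continuousOn_primitive_interval_left h_int b right_mem_uIcc).tendsto
  rw [← nhdsWithin_Ioo_eq_nhdsLT hab]
  refine (h_cont.mono_left
    (nhdsWithin_mono _ (Ioo_subset_Icc_self.trans Icc_subset_uIcc))).congr' ?_
  filter_upwards [self_mem_nhdsWithin] with x hx
  rw [intervalIntegral.integral_of_le hx.2.le, integral_Ioc_eq_integral_Ioo]

theorem exists_eventually_setIntegral_sdiff_Ioc_floor_le {w : ℝ → ℝ}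
    (hwint : IntegrableOn w (Ioo 0 1)) (hw : 0 ≤ᵐ[volume.restrict (Ioo 0 1)] w)
    {ε : ℝ} (hε : 0 < ε) :
    ∃ b ∈ Ioo (0 : ℝ) 1, ∀ᶠ n : ℕ in atTop,
      ∫ ξ in Ioo 0 1 \ Ioc 0 ((⌊b * n⌋₊ : ℝ) / n), w ξ ≤ ε := by
  obtain ⟨a, ha_tail, ha⟩ := (((tendsto_setIntegral_Ioo_nhdsLT one_pos hwint).eventually
    (gt_mem_nhds hε)).and (Ioo_mem_nhdsLT one_pos)).exists
  refine ⟨(a + 1) / 2, ⟨by linarith [ha.1], by linarith [ha.2]⟩, ?_⟩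
  have h_floor : ∀ᶠ n : ℕ in atTop, a < (⌊(a + 1) / 2 * n⌋₊ : ℝ) / n :=
    ((tendsto_nat_floor_mul_div_atTop (by linarith [ha.1])).comp
      tendsto_natCast_atTop_atTop).eventually (lt_mem_nhds (by linarith [ha.2]))
  filter_upwards [h_floor] with n h_floor
  refine (setIntegral_mono_set (hwint.mono_set (Ioo_subset_Ioo_left ha.1.le))
    (ae_restrict_of_ae_restrict_of_subset (Ioo_subset_Ioo_left ha.1.le) hw)
    (Eventually.of_forall ?_)).trans ha_tail.le
  rintro ξ ⟨⟨hξ0, hξ1⟩, hξt⟩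
  exact ⟨h_floor.trans (not_le.1 fun h => hξt ⟨hξ0, h⟩), hξ1⟩

theorem eventually_forall_abs_sub_lt_of_eqOn_cells {w : ℝ → ℝ} {c : ℕ → ℕ → ℝ}
    {wn : ℕ → ℝ → ℝ} {b : ℝ} (hb : b ≤ 1) (hwc : ContinuousOn w (Icc 0 b))
    (hwn : ∀ n : ℕ, ∀ k ∈ Finset.Icc 1 n,
      ∀ ξ ∈ Ioc (((k : ℝ) - 1) / n) ((k : ℝ) / n), wn n ξ = c n k)
    (hconv : ∀ δ > (0 : ℝ), ∃ N : ℕ, ∀ n ≥ N, ∀ k : ℕ,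
      1 ≤ k → (k : ℝ) ≤ n * b → |c n k - w (k / n)| < δ)
    {ε : ℝ} (hε : 0 < ε) :
    ∀ᶠ n : ℕ in atTop, ∀ ξ ∈ Ioc 0 ((⌊b * n⌋₊ : ℝ) / n), |wn n ξ - w ξ| < ε := by
  obtain ⟨δ, hδ, hw_unif⟩ := Metric.uniformContinuousOn_iff.1
    (isCompact_Icc.uniformContinuousOn_of_continuous hwc) (ε / 2) (half_pos hε)
  obtain ⟨N, hN⟩ := hconv (ε / 2) (half_pos hε)
  filter_upwards [eventually_ge_atTop (max N 1),
    tendsto_one_div_atTop_nhds_zero_nat.eventually (gt_mem_nhds hδ)] with n hn hn_δ ξ hξ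
  have hn_pos : (0 : ℝ) < n := by exact_mod_cast (le_of_max_le_right hn)
  obtain ⟨k, hk, hξk⟩ := exists_mem_Icc_mem_Ioc_div (le_of_max_le_right hn) hξ
  obtain ⟨hk1, hkm⟩ := Finset.mem_Icc.1 hk
  have hk_nb : (k : ℝ) ≤ n * b := mul_comm b n ▸ (Nat.le_floor_iff' (by omega)).1 hkm
  have hk_n : k ≤ n := by
    exact_mod_cast hk_nb.trans (mul_le_of_le_one_right n.cast_nonneg hb)
  have hk_mem : (k : ℝ) / n ∈ Icc 0 b :=
    ⟨by positivity, by rw [div_le_iff₀ hn_pos]; linarith⟩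
  have hξ_mem : ξ ∈ Icc 0 b :=
    ⟨(div_nonneg (by simpa using hk1) hn_pos.le).trans hξk.1.le, hξk.2.trans hk_mem.2⟩
  have h_dist : dist ξ (k / n) < δ := by
    have : ((k : ℝ) - 1) / n = k / n - 1 / n := sub_div _ _ _
    rw [Real.dist_eq, abs_sub_lt_iff]
    constructor <;> linarith [hξk.1, hξk.2]
  rw [hwn n k (Finset.mem_Icc.2 ⟨hk1, hk_n⟩) ξ hξk]
  calc |c n k - w ξ| ≤ |c n k - w (k / n)| + |w (k / n) - w ξ| := abs_sub_le _ _ _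
    _ < ε / 2 + ε / 2 := by
      refine add_lt_add (hN n (le_of_max_le_left hn) k hk1 hk_nb) ?_
      rw [abs_sub_comm]
      exact hw_unif _ hξ_mem _ hk_mem h_dist
    _ = ε := add_halves ε

/-- L¹-convergence of the step densities `w_n` (with `w_n = c_{n,k}` on `((k-1)/n, k/n]`)
to a continuous probability density `w` on `[0,1)`, given uniform convergence of the
coefficients `c_{n,k}` to `w(k/n)` on `[0, ξ*]` for every `ξ* < 1`. -/
theorem stmt_3 (w : ℝ → ℝ) (hwc : ContinuousOn w (Set.Ico 0 1))
    (hwnn : ∀ ξ ∈ Set.Ico (0 : ℝ) 1, 0 ≤ w ξ)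
    (hwint : MeasureTheory.IntegrableOn w (Set.Ioo 0 1))
    (hw1 : (∫ ξ in Set.Ioo (0 : ℝ) 1, w ξ) = 1)
    (c : ℕ → ℕ → ℝ)
    (hcnn : ∀ n k, 1 ≤ k → k ≤ n → 0 ≤ c n k)
    (hcsum : ∀ n : ℕ, 2 ≤ n → (1 / (n : ℝ)) * ∑ k ∈ Finset.Icc 1 n, c n k = 1)
    (wn : ℕ → ℝ → ℝ)
    (hwn : ∀ n : ℕ, ∀ k ∈ Finset.Icc 1 n,
      ∀ ξ ∈ Set.Ioc (((k : ℝ) - 1) / n) ((k : ℝ) / n), wn n ξ = c n k)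
    (hconv : ∀ ξs ∈ Set.Ioo (0 : ℝ) 1, ∀ δ > (0 : ℝ), ∃ N : ℕ, ∀ n ≥ N, ∀ k : ℕ,
      1 ≤ k → (k : ℝ) ≤ (n : ℝ) * ξs → |c n k - w ((k : ℝ) / n)| < δ) :
    Filter.Tendsto (fun n => ∫ ξ in Set.Ioo (0 : ℝ) 1, |wn n ξ - w ξ|)
      Filter.atTop (nhds 0) := by
  have hw_nonneg : 0 ≤ᵐ[volume.restrict (Ioo 0 1)] w :=
    ae_restrict_of_forall_mem measurableSet_Ioo fun ξ hξ => hwnn ξ (Ioo_subset_Ico_self hξ)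
  have hwn_nonneg (n : ℕ) (hn : 0 < n) : 0 ≤ᵐ[volume.restrict (Ioo 0 1)] wn n :=
    ae_restrict_of_forall_mem measurableSet_Ioo fun ξ hξ => nonneg_of_eqOn_cells hn (hwn n)
      (fun k hk => hcnn n k (Finset.mem_Icc.1 hk).1 (Finset.mem_Icc.1 hk).2)
      (Ioo_subset_Ioc_self hξ)
  have hwn_mass (n : ℕ) (hn : 2 ≤ n) :
      IntegrableOn (wn n) (Ioo 0 1) ∧ ∫ ξ in Ioo 0 1, wn n ξ = ∫ ξ in Ioo 0 1, w ξ := by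
    obtain ⟨h_int, h_eq⟩ := integrableOn_Ioo_and_integral_eq_of_eqOn_cells (by omega) (hwn n)
    exact ⟨h_int, by rw [h_eq, hw1, ← hcsum n hn, div_eq_inv_mul, one_div]⟩
  refine tendsto_order.2 ⟨fun _ h => Eventually.of_forall fun n =>
    h.trans_le (integral_nonneg fun _ => abs_nonneg _), fun ε hε => ?_⟩
  obtain ⟨b, hb, h_tail⟩ := exists_eventually_setIntegral_sdiff_Ioc_floor_le hwint hw_nonneg
    (by positivity : 0 < ε / 4)
  have h_close := eventually_forall_abs_sub_lt_of_eqOn_cells hb.2.le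
    (hwc.mono (Icc_subset_Ico_right hb.2)) hwn (hconv b hb) (by positivity : 0 < ε / 8)
  filter_upwards [h_close, h_tail, eventually_ge_atTop 2] with n h_close h_tail hn
  set t := Ioc (0 : ℝ) ((⌊b * n⌋₊ : ℝ) / n)
  have hts : t ⊆ Ioo 0 1 := fun ξ hξ => ⟨hξ.1, hξ.2.trans_lt <|
    (div_le_of_le_mul₀ n.cast_nonneg hb.1.le
      (Nat.floor_le (mul_nonneg hb.1.le n.cast_nonneg))).trans_lt hb.2⟩
  have h_bulk : ∫ ξ in t, |wn n ξ - w ξ| ≤ ε / 8 :=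
    (le_abs_self _).trans <| norm_setIntegral_le_of_measure_le_one
      ((measure_mono hts).trans (by simp)) (fun ξ hξ => by simpa using (h_close ξ hξ).le)
      (by positivity)
  calc ∫ ξ in Ioo 0 1, |wn n ξ - w ξ|
      ≤ 2 * (∫ ξ in t, |wn n ξ - w ξ|) + 2 * ∫ ξ in Ioo 0 1 \ t, w ξ :=
        integral_abs_sub_le_of_integral_eq measurableSet_Ioc hts (hwn_mass n hn).1 hwint
          (hwn_nonneg n (by omega)) hw_nonneg (hwn_mass n hn).2
    _ ≤ 2 * (ε / 8) + 2 * (ε / 4) := by gcongr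
    _ < ε := by linarith
end

section
/- Let α ∈ (0,2) and let g : [0,∞) → ℝ be a continuous probability density with 0 < g(x) < 1/α for all x ≥ 0 and ∫_0^∞ x g(x) dx = 1. Let G(x) = ∫_0^x g(t) dt be its cumulative distribution function, and for ξ ∈ [0,1) define w(ξ) = (1/(1 - α/2)) · (1/g(G^{-1}(ξ)) - α) · (1 - ξ). Then w is nonnegative and ∫_0^1 w(ξ) dξ = 1, i.e. w is a probability density on [0,1]. -/
open MeasureTheory Filter Set intervalIntegral

/-!
Substituting `ξ = G x` turns `∫₀¹ w` into `c ∫₀^∞ (1 - α g) T` with `c = 1/(1 - α/2)` and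
`T = 1 - G` the tail of `g`. Integrating by parts, `∫₀^∞ T = ∫₀^∞ x g x = 1` (the layer-cake
formula for the mean) and `∫₀^∞ g T = T(0)²/2 = 1/2`, so `∫₀¹ w = c (1 - α/2) = 1`.
Nonnegativity of `w` is `α g < 1`.
-/

open Topology

section Primitive

variable {f : ℝ → ℝ} {a : ℝ}

theorem intervalIntegrable_of_continuousOn_Ici (hf : ContinuousOn f (Ici a)) {x y : ℝ}
    (hx : a ≤ x) (hy : a ≤ y) : IntervalIntegrable f volume x y :=
  (hf.mono (ordConnected_Ici.uIcc_subset hx hy)).intervalIntegrable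

theorem hasDerivAt_primitive_of_continuousOn_Ici (hf : ContinuousOn f (Ici a)) {x : ℝ}
    (hx : a < x) : HasDerivAt (fun u => ∫ t in a..u, f t) (f x) x :=
  integral_hasDerivAt_right (intervalIntegrable_of_continuousOn_Ici hf le_rfl hx.le)
    ((hf.mono Ioi_subset_Ici_self).stronglyMeasurableAtFilter isOpen_Ioi x hx)
    (hf.continuousAt (Ici_mem_nhds hx))

theorem continuousWithinAt_primitive_Ici (hf : ContinuousOn f (Ici a)) :
    ContinuousWithinAt (fun u => ∫ t in a..u, f t) (Ici a) a := by
  have hcont : ContinuousOn (fun u => ∫ t in a..u, f t) (uIcc a (a + 1)) :=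
    continuousOn_primitive_interval
      (hf.mono (ordConnected_Ici.uIcc_subset le_rfl (mem_Ici.2 (by linarith)))).integrableOn_uIcc
  rw [uIcc_of_le (by linarith)] at hcont
  exact (hcont a (left_mem_Icc.2 (by linarith))).mono_of_mem_nhdsWithin
    (Icc_mem_nhdsGE (by linarith))

theorem strictMonoOn_primitive_of_pos (hf : ContinuousOn f (Ici a))
    (hpos : ∀ x, a ≤ x → 0 < f x) : StrictMonoOn (fun u => ∫ t in a..u, f t) (Ici a) := by
  intro x hx y hy hxy
  have hsplit : (∫ t in a..y, f t) - ∫ t in a..x, f t = ∫ t in x..y, f t :=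
    integral_interval_sub_left (intervalIntegrable_of_continuousOn_Ici hf le_rfl hy)
      (intervalIntegrable_of_continuousOn_Ici hf le_rfl hx)
  have hxy_pos : 0 < ∫ t in x..y, f t :=
    intervalIntegral_pos_of_pos_on (intervalIntegrable_of_continuousOn_Ici hf hx hy)
      (fun t ht => hpos t (le_trans hx ht.1.le)) hxy
  exact sub_pos.1 (hsplit ▸ hxy_pos)

theorem primitive_mem_Ioo (hf : ContinuousOn f (Ici a)) (hpos : ∀ x, a ≤ x → 0 < f x)
    (hfi : IntegrableOn f (Ioi a)) {b : ℝ} (hb : a < b) :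
    ∫ t in a..b, f t ∈ Ioo 0 (∫ t in Ioi a, f t) := by
  have hmono := strictMonoOn_primitive_of_pos hf hpos
  refine ⟨by simpa using hmono self_mem_Ici (mem_Ici.2 hb.le) hb, ?_⟩
  calc ∫ t in a..b, f t < ∫ t in a..b + 1, f t :=
        hmono (mem_Ici.2 hb.le) (mem_Ici.2 (by linarith)) (by linarith)
    _ ≤ ∫ t in Ioi a, f t :=
        ge_of_tendsto (intervalIntegral_tendsto_integral_Ioi a hfi tendsto_id)
          ((eventually_ge_atTop (b + 1)).mono fun x hx =>
            hmono.monotoneOn (mem_Ici.2 (by linarith)) (mem_Ici.2 (show a ≤ x by linarith)) hx)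

theorem integral_image_primitive (hf : ContinuousOn f (Ici a))
    (hpos : ∀ x, a ≤ x → 0 < f x) (w : ℝ → ℝ) :
    ∫ ξ in (fun u => ∫ t in a..u, f t) '' Ioi a, w ξ =
      ∫ x in Ioi a, f x * w (∫ t in a..x, f t) := by
  rw [integral_image_eq_integral_abs_deriv_smul measurableSet_Ioi
    (fun x hx => (hasDerivAt_primitive_of_continuousOn_Ici hf hx).hasDerivWithinAt)
    ((strictMonoOn_primitive_of_pos hf hpos).injOn.mono Ioi_subset_Ici_self)]
  refine setIntegral_congr_fun measurableSet_Ioi fun x hx => ?_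
  rw [abs_of_pos (hpos x (le_of_lt hx)), smul_eq_mul]

end Primitive

noncomputable def tailIntegral (f : ℝ → ℝ) (x : ℝ) : ℝ := ∫ t in Ioi x, f t

section Tail

variable {f : ℝ → ℝ} {a : ℝ}

theorem tailIntegral_eq_sub_primitive (hfi : IntegrableOn f (Ioi a)) {x : ℝ} (hx : a ≤ x) :
    tailIntegral f x = (∫ t in Ioi a, f t) - ∫ t in a..x, f t := by
  rw [← integral_Ioi_sub_Ioi hfi hx, tailIntegral, sub_sub_cancel]

theorem tailIntegral_nonneg (hf : ∀ t, a < t → 0 ≤ f t) {x : ℝ} (hx : a ≤ x) :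
    0 ≤ tailIntegral f x :=
  setIntegral_nonneg measurableSet_Ioi fun t ht => hf t (lt_of_le_of_lt hx ht)

theorem hasDerivAt_tailIntegral (hf : ContinuousOn f (Ici a)) (hfi : IntegrableOn f (Ioi a))
    {x : ℝ} (hx : a < x) : HasDerivAt (tailIntegral f) (-f x) x :=
  ((hasDerivAt_primitive_of_continuousOn_Ici hf hx).const_sub _).congr_of_eventuallyEq
    (eventually_of_mem (Ioi_mem_nhds hx) fun _ hy => tailIntegral_eq_sub_primitive hfi hy.le)

theorem continuousWithinAt_tailIntegral (hf : ContinuousOn f (Ici a))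
    (hfi : IntegrableOn f (Ioi a)) : ContinuousWithinAt (tailIntegral f) (Ici a) a :=
  (continuousWithinAt_const.sub (continuousWithinAt_primitive_Ici hf)).congr
    (fun _ hy => tailIntegral_eq_sub_primitive hfi hy) (tailIntegral_eq_sub_primitive hfi le_rfl)

theorem tendsto_tailIntegral_atTop : Tendsto (tailIntegral f) atTop (𝓝 0) :=
  tendsto_integral_Ioi_zero tendsto_id

/-- Markov's inequality in integral form, `x ∫_x^∞ f ≤ ∫_x^∞ t f(t)`, bounds `x T(x)` by the tail
of an integrable function. -/
theorem tendsto_mul_tailIntegral_atTop (hf : ∀ t, 0 < t → 0 ≤ f t)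
    (hmean : IntegrableOn (fun t => t * f t) (Ioi 0)) :
    Tendsto (fun x => x * tailIntegral f x) atTop (𝓝 0) := by
  refine squeeze_zero' ?_ ?_ (tendsto_tailIntegral_atTop (f := fun t => t * f t))
  · filter_upwards [eventually_ge_atTop 0] with x hx
    exact mul_nonneg hx (tailIntegral_nonneg hf hx)
  · filter_upwards [eventually_ge_atTop 0] with x hx
    rw [tailIntegral, ← MeasureTheory.integral_const_mul]
    refine integral_mono_of_nonneg ?_ (hmean.mono_set (Ioi_subset_Ioi hx)) ?_
    · filter_upwards [ae_restrict_mem measurableSet_Ioi] with t ht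
      exact mul_nonneg hx (hf t (lt_of_le_of_lt hx ht))
    · filter_upwards [ae_restrict_mem measurableSet_Ioi] with t ht
      exact mul_le_mul_of_nonneg_right (le_of_lt ht) (hf t (lt_of_le_of_lt hx ht))

end Tail

section LayerCake

variable {f : ℝ → ℝ}

theorem hasDerivAt_mul_tailIntegral_add_primitive (hf : ContinuousOn f (Ici 0))
    (hfi : IntegrableOn f (Ioi 0)) {x : ℝ} (hx : 0 < x) :
    HasDerivAt (fun u => u * tailIntegral f u + ∫ t in (0 : ℝ)..u, t * f t)
      (tailIntegral f x) x := by
  refine (((hasDerivAt_id' x).fun_mul (hasDerivAt_tailIntegral hf hfi hx)).fun_add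
    (hasDerivAt_primitive_of_continuousOn_Ici ((continuousOn_id' _).fun_mul hf) hx)).congr_deriv ?_
  ring

theorem integrableOn_and_integral_tailIntegral (hf : ContinuousOn f (Ici 0))
    (hf0 : ∀ t, 0 < t → 0 ≤ f t) (hfi : IntegrableOn f (Ioi 0))
    (hmean : IntegrableOn (fun t => t * f t) (Ioi 0)) :
    IntegrableOn (tailIntegral f) (Ioi 0) ∧
      ∫ x in Ioi 0, tailIntegral f x = ∫ x in Ioi 0, x * f x := by
  have hcont : ContinuousWithinAt
      (fun u => u * tailIntegral f u + ∫ t in (0 : ℝ)..u, t * f t) (Ici 0) 0 :=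
    (continuousWithinAt_id.mul (continuousWithinAt_tailIntegral hf hfi)).add
      (continuousWithinAt_primitive_Ici ((continuousOn_id' _).fun_mul hf))
  have hderiv := fun x (hx : x ∈ Ioi (0 : ℝ)) =>
    hasDerivAt_mul_tailIntegral_add_primitive hf hfi hx
  have hnonneg := fun x (hx : x ∈ Ioi (0 : ℝ)) => tailIntegral_nonneg hf0 (le_of_lt hx)
  have hlim : Tendsto (fun u => u * tailIntegral f u + ∫ t in (0 : ℝ)..u, t * f t) atTop
      (𝓝 (0 + ∫ x in Ioi 0, x * f x)) :=
    (tendsto_mul_tailIntegral_atTop hf0 hmean).add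
      (intervalIntegral_tendsto_integral_Ioi 0 hmean tendsto_id)
  refine ⟨integrableOn_Ioi_deriv_of_nonneg hcont hderiv hnonneg hlim, ?_⟩
  rw [integral_Ioi_of_hasDerivAt_of_nonneg hcont hderiv hnonneg hlim]
  simp

theorem hasDerivAt_neg_tailIntegral_sq_div_two (hf : ContinuousOn f (Ici 0))
    (hfi : IntegrableOn f (Ioi 0)) {x : ℝ} (hx : 0 < x) :
    HasDerivAt (fun u => -tailIntegral f u ^ 2 / 2) (f x * tailIntegral f x) x := by
  refine ((((hasDerivAt_tailIntegral hf hfi hx).fun_pow 2).fun_neg).div_const 2).congr_deriv ?_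
  norm_num
  ring

theorem integrableOn_and_integral_mul_tailIntegral (hf : ContinuousOn f (Ici 0))
    (hf0 : ∀ t, 0 < t → 0 ≤ f t) (hfi : IntegrableOn f (Ioi 0)) :
    IntegrableOn (fun x => f x * tailIntegral f x) (Ioi 0) ∧
      ∫ x in Ioi 0, f x * tailIntegral f x = tailIntegral f 0 ^ 2 / 2 := by
  have hcont : ContinuousWithinAt (fun u => -tailIntegral f u ^ 2 / 2) (Ici 0) 0 :=
    (((continuousWithinAt_tailIntegral hf hfi).pow 2).neg).div_const 2
  have hderiv := fun x (hx : x ∈ Ioi (0 : ℝ)) => hasDerivAt_neg_tailIntegral_sq_div_two hf hfi hx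
  have hnonneg := fun x (hx : x ∈ Ioi (0 : ℝ)) =>
    mul_nonneg (hf0 x hx) (tailIntegral_nonneg hf0 (le_of_lt hx))
  have hlim : Tendsto (fun u => -tailIntegral f u ^ 2 / 2) atTop (𝓝 (-0 ^ 2 / 2)) :=
    ((tendsto_tailIntegral_atTop.pow 2).neg).div_const 2
  refine ⟨integrableOn_Ioi_deriv_of_nonneg hcont hderiv hnonneg hlim, ?_⟩
  rw [integral_Ioi_of_hasDerivAt_of_nonneg hcont hderiv hnonneg hlim]
  ring

theorem integral_one_sub_mul_tailIntegral (hf : ContinuousOn f (Ici 0))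
    (hf0 : ∀ t, 0 < t → 0 ≤ f t) (hfi : IntegrableOn f (Ioi 0))
    (hmean : IntegrableOn (fun t => t * f t) (Ioi 0)) (α : ℝ) :
    ∫ x in Ioi 0, (1 - α * f x) * tailIntegral f x =
      (∫ x in Ioi 0, x * f x) - α * (∫ x in Ioi 0, f x) ^ 2 / 2 := by
  obtain ⟨hTi, hT⟩ := integrableOn_and_integral_tailIntegral hf hf0 hfi hmean
  obtain ⟨hfTi, hfT⟩ := integrableOn_and_integral_mul_tailIntegral hf hf0 hfi
  calc ∫ x in Ioi 0, (1 - α * f x) * tailIntegral f x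
      = ∫ x in Ioi 0, (tailIntegral f x - α * (f x * tailIntegral f x)) := by
        congr 1 with x
        ring
    _ = _ := by
        rw [integral_sub hTi (hfTi.const_mul α), MeasureTheory.integral_const_mul, hT, hfT,
          tailIntegral]
        ring

end LayerCake

/-- For `α ∈ (0,2)` and a continuous probability density `g` on `[0,∞)` with
`0 < g < 1/α` and unit mean, the function
`w(ξ) = (1/(1-α/2))·(1/g(G⁻¹(ξ)) - α)·(1-ξ)` is a probability density on `[0,1]`. -/
theorem stmt_4 (α : ℝ) (hα : α ∈ Set.Ioo (0 : ℝ) 2)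
    (g : ℝ → ℝ) (hgc : ContinuousOn g (Set.Ici 0))
    (hgpos : ∀ x : ℝ, 0 ≤ x → 0 < g x ∧ g x < 1 / α)
    (hgint : IntegrableOn g (Set.Ici 0))
    (hg1 : (∫ x in Set.Ici (0 : ℝ), g x) = 1)
    (hxgint : IntegrableOn (fun x => x * g x) (Set.Ici 0))
    (hxg1 : (∫ x in Set.Ici (0 : ℝ), x * g x) = 1)
    (G : ℝ → ℝ) (hG : ∀ x, G x = ∫ t in (0 : ℝ)..x, g t)
    (Ginv : ℝ → ℝ)
    (hGinv : ∀ ξ ∈ Set.Ico (0 : ℝ) 1, Ginv ξ ∈ Set.Ici (0 : ℝ) ∧ G (Ginv ξ) = ξ)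
    (w : ℝ → ℝ)
    (hw : ∀ ξ ∈ Set.Ico (0 : ℝ) 1,
      w ξ = (1 / (1 - α / 2)) * (1 / g (Ginv ξ) - α) * (1 - ξ)) :
    (∀ ξ ∈ Set.Ico (0 : ℝ) 1, 0 ≤ w ξ) ∧ (∫ ξ in Set.Ioo (0 : ℝ) 1, w ξ) = 1 := by
  obtain ⟨hα0, hα2⟩ := hα
  obtain rfl : G = fun x => ∫ t in (0 : ℝ)..x, g t := funext hG
  rw [integral_Ici_eq_integral_Ioi] at hg1 hxg1
  have hgi : IntegrableOn g (Ioi 0) := hgint.mono_set Ioi_subset_Ici_self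
  have hg0 : ∀ x, 0 ≤ x → 0 < g x := fun x hx => (hgpos x hx).1
  have hGmem : ∀ x, 0 < x → ∫ t in (0 : ℝ)..x, g t ∈ Ioo 0 1 := fun x hx =>
    hg1 ▸ primitive_mem_Ioo hgc hg0 hgi hx
  have hc : 0 < 1 / (1 - α / 2) := one_div_pos.2 (by linarith)
  refine ⟨fun ξ hξ => ?_, ?_⟩
  · obtain ⟨hx, -⟩ := hGinv ξ hξ
    have hαg : α ≤ 1 / g (Ginv ξ) := (le_one_div hα0 (hg0 _ hx)).2 (hgpos _ hx).2.le
    rw [hw ξ hξ]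
    exact mul_nonneg (mul_nonneg hc.le (by linarith)) (by linarith [hξ.2])
  have himage : (fun x => ∫ t in (0 : ℝ)..x, g t) '' Ioi 0 = Ioo 0 1 := by
    refine Subset.antisymm (MapsTo.image_subset hGmem) fun ξ hξ => ?_
    obtain ⟨hx, hGx⟩ := hGinv ξ (Ioo_subset_Ico_self hξ)
    refine ⟨Ginv ξ, mem_Ioi.2 (lt_of_le_of_ne hx fun h0 => ?_), hGx⟩
    simp [← h0, hξ.1.ne] at hGx
  rw [← himage, integral_image_primitive hgc hg0]
  calc ∫ x in Ioi 0, g x * w (∫ t in (0 : ℝ)..x, g t)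
      = ∫ x in Ioi 0, 1 / (1 - α / 2) * ((1 - α * g x) * tailIntegral g x) := by
        refine setIntegral_congr_fun measurableSet_Ioi fun x hx => ?_
        have hGx := Ioo_subset_Ico_self (hGmem x hx)
        have hinv : Ginv (∫ t in (0 : ℝ)..x, g t) = x :=
          (strictMonoOn_primitive_of_pos hgc hg0).injOn (hGinv _ hGx).1 (mem_Ici.2 hx.le)
            (hGinv _ hGx).2
        rw [hw _ hGx, hinv, tailIntegral_eq_sub_primitive hgi hx.le, hg1]
        field_simp [(hg0 x hx.le).ne']
    _ = 1 := by
        rw [MeasureTheory.integral_const_mul, integral_one_sub_mul_tailIntegral hgc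
          (fun x hx => (hg0 x hx.le).le) hgi (hxgint.mono_set Ioi_subset_Ici_self), hxg1, hg1]
        field_simp
end

section
/- Let α ∈ (0,2) and define φ_α(ξ) = (1 - α/2) log(1/(1-ξ)) + α ξ for ξ ∈ [0,1). Then φ_α is a strictly increasing differentiable bijection from [0,1) onto [0,∞), its inverse F_α = φ_α^{-1} : [0,∞) → [0,1) is differentiable, and the density f_α(x) := F_α'(x) = 1/φ_α'(F_α(x)) satisfies: 0 < f_α(x) < 1/α for all x ≥ 0, ∫_0^∞ f_α(x) dx = 1, and ∫_0^∞ x f_α(x) dx = 1. -/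
/-!
Writing `φ_α ξ = c log (1/(1-ξ)) + α ξ` with `c = 1 - α/2 > 0`, we have
`φ_α' ξ = c/(1-ξ) + α > α`, `φ_α 0 = 0` and `φ_α → ∞` as `ξ → 1`, so `φ_α` is an increasing
bijection `[0,1) → [0,∞)` and `f_α = 1/φ_α' ∘ F_α` lies in `(0, 1/α)`. Since
`f_α (φ_α ξ) · φ_α' ξ = 1`, the substitution `x = φ_α ξ` turns `∫₀^∞ g(x) f_α(x) dx` into
`∫₀¹ g(φ_α ξ) dξ`: `f_α` is the density of `φ_α(U)` for `U` uniform on `[0,1)`. Taking `g = 1`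
gives total mass `1`, and taking `g = id` gives the mean `∫₀¹ φ_α = c + α/2 = 1`, because
`∫₀¹ log (1/(1-ξ)) dξ = 1`.
-/

open MeasureTheory Filter Set
open scoped Topology

theorem HasDerivWithinAt.of_local_left_inverse {𝕜 : Type*} [NontriviallyNormedField 𝕜]
    {f g : 𝕜 → 𝕜} {f' a : 𝕜} {s : Set 𝕜} (hg : ContinuousWithinAt g s a)
    (hf : HasDerivAt f f' (g a)) (hf' : f' ≠ 0) (ha : a ∈ s)
    (hfg : ∀ᶠ y in 𝓝[s] a, f (g y) = y) : HasDerivWithinAt g f'⁻¹ s a :=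
  HasFDerivWithinAt.of_local_left_inverse (t := univ)
    (f' := ContinuousLinearEquiv.unitsEquivAut 𝕜 (Units.mk0 f' hf'))
    (by simpa only [nhdsWithin_univ] using hg.tendsto) hf.hasDerivWithinAt ha hfg

theorem StrictMonoOn.of_invOn {α β : Type*} [LinearOrder α] [LinearOrder β] {f : α → β}
    {g : β → α} {s : Set α} {t : Set β} (hf : StrictMonoOn f s) (hfg : InvOn g f s t)
    (hg : MapsTo g t s) : StrictMonoOn g t := fun x hx y hy hxy => by
  rwa [← hf.lt_iff_lt (hg hx) (hg hy), hfg.2 hx, hfg.2 hy]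

theorem StrictMonoOn.continuousWithinAt_Ici_of_image_eq_Ico {α β : Type*} [LinearOrder α]
    [TopologicalSpace α] [OrderTopology α] [LinearOrder β] [TopologicalSpace β] [OrderTopology β]
    [DenselyOrdered β] {g : α → β} {a x : α} {c : β} (hg : StrictMonoOn g (Ici a))
    (himg : g '' Ici a = Ico (g a) c) (hx : a ≤ x) : ContinuousWithinAt g (Ici a) x := by
  have hgx : g x ∈ Ico (g a) c := himg ▸ mem_image_of_mem g hx
  rcases hx.eq_or_lt with rfl | hax
  · exact hg.continuousWithinAt_right_of_image_mem_nhdsWithin self_mem_nhdsWithin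
      (himg ▸ Ico_mem_nhdsGE hgx.2)
  · exact (hg.continuousAt_of_image_mem_nhds (Ici_mem_nhds hax)
      (himg ▸ Ico_mem_nhds (hg self_mem_Ici (mem_Ici.2 hax.le) hax) hgx.2)).continuousWithinAt

theorem integral_image_smul_eq_integral_comp {E : Type*} [NormedAddCommGroup E]
    [NormedSpace ℝ E] {φ φ' f : ℝ → ℝ} {s : Set ℝ} (hs : MeasurableSet s)
    (hφ : ∀ ξ ∈ s, HasDerivWithinAt φ (φ' ξ) s ξ) (hmono : MonotoneOn φ s)
    (hf : ∀ ξ ∈ s, φ' ξ * f (φ ξ) = 1) (g : ℝ → E) :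
    ∫ x in φ '' s, f x • g x = ∫ ξ in s, g (φ ξ) := by
  rw [integral_image_eq_integral_deriv_smul_of_monotoneOn hs hφ hmono]
  exact setIntegral_congr_fun hs fun ξ hξ => by simp only [smul_smul, hf ξ hξ, one_smul]

/-- `φ_α = logQuantile (1 - α / 2) α`. -/
noncomputable def logQuantile (c a ξ : ℝ) : ℝ := c * Real.log (1 / (1 - ξ)) + a * ξ

noncomputable def logQuantileDeriv (c a ξ : ℝ) : ℝ := c / (1 - ξ) + a

section LogQuantile

variable {c a ξ : ℝ}

@[simp]
theorem logQuantile_zero : logQuantile c a 0 = 0 := by simp [logQuantile]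

theorem hasDerivAt_logQuantile (hξ : ξ < 1) :
    HasDerivAt (logQuantile c a) (logQuantileDeriv c a ξ) ξ := by
  have hfun : logQuantile c a = fun x => c * -Real.log (1 - x) + a * x := by
    funext x; simp [logQuantile, Real.log_inv]
  rw [hfun]
  refine (((((hasDerivAt_id ξ).const_sub 1).log (sub_ne_zero.2 hξ.ne')).neg.const_mul c).add
    ((hasDerivAt_id ξ).const_mul a)).congr_deriv ?_
  simp [logQuantileDeriv, div_eq_mul_inv]

theorem logQuantileDeriv_pos (hc : 0 < c) (ha : 0 ≤ a) (hξ : ξ < 1) :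
    0 < logQuantileDeriv c a ξ :=
  add_pos_of_pos_of_nonneg (div_pos hc (sub_pos.2 hξ)) ha

theorem inv_logQuantileDeriv_lt (hc : 0 < c) (ha : 0 < a) (hξ : ξ < 1) :
    (logQuantileDeriv c a ξ)⁻¹ < 1 / a := by
  rw [one_div]
  exact inv_strictAnti₀ ha (lt_add_of_pos_left a (div_pos hc (sub_pos.2 hξ)))

theorem strictMonoOn_logQuantile (hc : 0 < c) (ha : 0 ≤ a) :
    StrictMonoOn (logQuantile c a) (Iio 1) := by
  refine strictMonoOn_of_deriv_pos (convex_Iio 1)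
    (fun ξ hξ => (hasDerivAt_logQuantile hξ).continuousAt.continuousWithinAt) fun ξ hξ => ?_
  rw [interior_Iio] at hξ
  rw [(hasDerivAt_logQuantile hξ).deriv]
  exact logQuantileDeriv_pos hc ha hξ

theorem logQuantile_one_sub_exp (hc : c ≠ 0) (y : ℝ) :
    logQuantile c a (1 - Real.exp (-(y / c))) = y + a * (1 - Real.exp (-(y / c))) := by
  rw [logQuantile, sub_sub_cancel, one_div, ← Real.exp_neg, neg_neg, Real.log_exp,
    mul_div_cancel₀ y hc]

theorem bijOn_logQuantile (hc : 0 < c) (ha : 0 ≤ a) :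
    BijOn (logQuantile c a) (Ico 0 1) (Ici 0) := by
  have hmono := (strictMonoOn_logQuantile hc ha).mono (Ico_subset_Iio_self (a := 0))
  refine ⟨fun ξ hξ => ?_, hmono.injOn, fun y hy => ?_⟩
  · simpa using hmono.monotoneOn ⟨le_rfl, one_pos⟩ hξ hξ.1
  · -- at `b = 1 - exp (-y/c)` the logarithmic term alone already equals `y`
    set b := 1 - Real.exp (-(y / c))
    have hb0 : 0 ≤ b := by
      have : -(y / c) ≤ 0 := neg_nonpos.2 (div_nonneg hy hc.le)
      simpa [b] using Real.exp_le_one_iff.2 this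
    have hb1 : b < 1 := by simp [b, Real.exp_pos]
    have hyb : y ∈ Icc (logQuantile c a 0) (logQuantile c a b) := by
      rw [logQuantile_zero, logQuantile_one_sub_exp hc.ne']
      exact ⟨hy, le_add_of_nonneg_right (mul_nonneg ha hb0)⟩
    obtain ⟨ξ, hξ, rfl⟩ := intermediate_value_Icc hb0
      (fun x hx => (hasDerivAt_logQuantile (hx.2.trans_lt hb1)).continuousAt.continuousWithinAt)
      hyb
    exact ⟨ξ, ⟨hξ.1, hξ.2.trans_lt hb1⟩, rfl⟩

theorem setIntegral_Ico_logQuantile : ∫ ξ in Ico 0 1, logQuantile c a ξ = c + a / 2 := by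
  have hlog : ∫ ξ in (0 : ℝ)..1, Real.log (1 / (1 - ξ)) = 1 := by
    simp only [one_div, Real.log_inv, intervalIntegral.integral_neg,
      intervalIntegral.integral_comp_sub_left (fun x => Real.log x), integral_log]
    norm_num
  have hint : IntervalIntegrable (fun ξ => Real.log (1 / (1 - ξ))) volume 0 1 := by
    have h := (intervalIntegral.intervalIntegrable_log' (a := 0) (b := 1)).comp_sub_left 1
    simp only [sub_self, sub_zero] at h
    simp only [one_div, Real.log_inv]
    exact h.symm.neg
  rw [integral_Ico_eq_integral_Ioo, ← integral_Ioc_eq_integral_Ioo,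
    ← intervalIntegral.integral_of_le zero_le_one]
  simp only [logQuantile]
  rw [intervalIntegral.integral_add (hint.const_mul c)
      (intervalIntegral.intervalIntegrable_id.const_mul a),
    intervalIntegral.integral_const_mul, intervalIntegral.integral_const_mul, hlog, integral_id]
  ring

variable {F : ℝ → ℝ} {x : ℝ}

theorem invOn_of_leftInvOn_logQuantile (hc : 0 < c) (ha : 0 ≤ a)
    (hF : LeftInvOn F (logQuantile c a) (Ico 0 1)) :
    InvOn F (logQuantile c a) (Ico 0 1) (Ici 0) :=
  ⟨hF, (bijOn_logQuantile hc ha).image_eq ▸ hF.rightInvOn_image⟩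

theorem bijOn_of_leftInvOn_logQuantile (hc : 0 < c) (ha : 0 ≤ a)
    (hF : LeftInvOn F (logQuantile c a) (Ico 0 1)) :
    BijOn F (Ici 0) (Ico 0 1) :=
  (bijOn_logQuantile hc ha).symm (invOn_of_leftInvOn_logQuantile hc ha hF).symm

theorem hasDerivWithinAt_of_leftInvOn_logQuantile (hc : 0 < c) (ha : 0 ≤ a)
    (hF : LeftInvOn F (logQuantile c a) (Ico 0 1)) (hx : 0 ≤ x) :
    HasDerivWithinAt F (logQuantileDeriv c a (F x))⁻¹ (Ici 0) x := by
  have hinv := invOn_of_leftInvOn_logQuantile hc ha hF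
  have hbij := bijOn_of_leftInvOn_logQuantile hc ha hF
  have hFmono : StrictMonoOn F (Ici 0) :=
    ((strictMonoOn_logQuantile hc ha).mono (Ico_subset_Iio_self (a := 0))).of_invOn hinv
      hbij.mapsTo
  have hF0 : F 0 = 0 := by simpa using hF ⟨le_rfl, one_pos⟩
  have hFx : F x < 1 := (hbij.mapsTo hx).2
  have hcont := hFmono.continuousWithinAt_Ici_of_image_eq_Ico (by rw [hbij.image_eq, hF0]) hx
  exact HasDerivWithinAt.of_local_left_inverse hcont (hasDerivAt_logQuantile hFx)
    (logQuantileDeriv_pos hc ha hFx).ne' hx (eventually_nhdsWithin_of_forall hinv.2)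

theorem integral_Ici_smul_eq_integral_logQuantile {E : Type*} [NormedAddCommGroup E]
    [NormedSpace ℝ E] (hc : 0 < c) (ha : 0 ≤ a) (hF : LeftInvOn F (logQuantile c a) (Ico 0 1))
    {f : ℝ → ℝ} (hf : ∀ x ∈ Ici (0 : ℝ), f x = (logQuantileDeriv c a (F x))⁻¹) (g : ℝ → E) :
    ∫ x in Ici 0, f x • g x = ∫ ξ in Ico 0 1, g (logQuantile c a ξ) := by
  have hbij := bijOn_logQuantile hc ha
  have hdensity (ξ : ℝ) (hξ : ξ ∈ Ico 0 1) :
      logQuantileDeriv c a ξ * f (logQuantile c a ξ) = 1 := by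
    rw [hf _ (hbij.mapsTo hξ), hF hξ, mul_inv_cancel₀ (logQuantileDeriv_pos hc ha hξ.2).ne']
  rw [← hbij.image_eq]
  exact integral_image_smul_eq_integral_comp measurableSet_Ico
    (fun ξ hξ => (hasDerivAt_logQuantile hξ.2).hasDerivWithinAt)
    ((strictMonoOn_logQuantile hc ha).mono Ico_subset_Iio_self).monotoneOn hdensity g

end LogQuantile

/-- The quantile function `φ_α(ξ) = (1-α/2)log(1/(1-ξ)) + αξ` is a strictly increasing
differentiable bijection from `[0,1)` onto `[0,∞)`; its inverse `F_α` is differentiable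
with `F_α' = f_α := 1/φ_α'(F_α(·))`, and `f_α` satisfies `0 < f_α < 1/α`,
`∫₀^∞ f_α = 1` and `∫₀^∞ x f_α(x) dx = 1`. -/
theorem stmt_6 (α : ℝ) (hα : α ∈ Set.Ioo (0 : ℝ) 2)
    (φ : ℝ → ℝ) (hφ : ∀ ξ, φ ξ = (1 - α / 2) * Real.log (1 / (1 - ξ)) + α * ξ)
    (F : ℝ → ℝ) (hF : ∀ ξ ∈ Set.Ico (0 : ℝ) 1, F (φ ξ) = ξ)
    (f : ℝ → ℝ) (hf : ∀ x, f x = 1 / deriv φ (F x)) :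
    StrictMonoOn φ (Set.Ico 0 1) ∧
    (∀ ξ ∈ Set.Ico (0 : ℝ) 1, DifferentiableAt ℝ φ ξ) ∧
    Set.BijOn φ (Set.Ico 0 1) (Set.Ici 0) ∧
    (∀ x ∈ Set.Ici (0 : ℝ), DifferentiableWithinAt ℝ F (Set.Ici 0) x ∧
      derivWithin F (Set.Ici 0) x = f x) ∧
    (∀ x ∈ Set.Ici (0 : ℝ), 0 < f x ∧ f x < 1 / α) ∧
    (∫ x in Set.Ici (0 : ℝ), f x) = 1 ∧
    (∫ x in Set.Ici (0 : ℝ), x * f x) = 1 := by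
  obtain ⟨hα0, hα2⟩ := hα
  have hc : 0 < 1 - α / 2 := by linarith
  obtain rfl : φ = logQuantile (1 - α / 2) α := funext hφ
  have hFmaps := (bijOn_of_leftInvOn_logQuantile hc hα0.le hF).mapsTo
  have hf_eq : ∀ x ∈ Ici (0 : ℝ), f x = (logQuantileDeriv (1 - α / 2) α (F x))⁻¹ := fun x hx => by
    rw [hf, (hasDerivAt_logQuantile (hFmaps hx).2).deriv, one_div]
  have hcov := integral_Ici_smul_eq_integral_logQuantile (E := ℝ) hc hα0.le hF hf_eq
  refine ⟨(strictMonoOn_logQuantile hc hα0.le).mono Ico_subset_Iio_self,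
    fun ξ hξ => (hasDerivAt_logQuantile hξ.2).differentiableAt,
    bijOn_logQuantile hc hα0.le, fun x hx => ?_, fun x hx => ?_, ?_, ?_⟩
  · have hd := hasDerivWithinAt_of_leftInvOn_logQuantile hc hα0.le hF hx
    exact ⟨hd.differentiableWithinAt,
      (hd.derivWithin (uniqueDiffOn_Ici 0 x hx)).trans (hf_eq x hx).symm⟩
  · rw [hf_eq x hx]
    exact ⟨inv_pos.2 (logQuantileDeriv_pos hc hα0.le (hFmaps hx).2),
      inv_logQuantileDeriv_lt hc hα0 (hFmaps hx).2⟩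
  · simpa using hcov fun _ => 1
  · simp only [smul_eq_mul, mul_comm (f _)] at hcov
    rw [hcov fun x => x, setIntegral_Ico_logQuantile]
    ring
end

section
/- Let n ≥ 2, ξ* ∈ (0,1), ξ ∈ (0, ξ*], α ∈ [0,2], and C, ε > 0. Let z_1, …, z_{⌊nξ⌋} be square-integrable real random variables on a probability space with Var[z_j] ≤ Cε/n for all j and |Cov(z_j, z_k)| ≤ Cε/n² for all j ≠ k. Then Var[ (1 - α/2) Σ_{j=1}^{⌊nξ⌋} z_j/(1 - (j-1)/n) ] ≤ (1 - α/2)² C ε ( 1/(1-ξ) + (log(1-ξ))² ). -/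
/-!
The variance of `∑ aⱼ zⱼ` is the double sum `∑ aⱼ aₖ Cov(zⱼ, zₖ)`; the diagonal contributes
at most `Cε/n · ∑ aⱼ²` and the off-diagonal at most `Cε/n² · (∑ aⱼ)²`. For the weights
`aⱼ = (1 - (j-1)/n)⁻¹ = n/(n-j+1)` both sums telescope against `1/y² ≤ 1/(y-1) - 1/y` and
`1/y ≤ log y - log (y-1)`, giving `∑ aⱼ² ≤ n²/(n-m)` and `∑ aⱼ ≤ n log (n/(n-m))` for
`m = ⌊nξ⌋`; finally `n - m ≥ n(1-ξ)`.
-/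

open MeasureTheory ProbabilityTheory Finset Real

section VarianceBound

variable {Ω ι : Type*} [MeasurableSpace Ω] {μ : Measure Ω} [IsFiniteMeasure μ]

lemma variance_fun_sum_mul_le (s : Finset ι) (X : ι → Ω → ℝ) (a : ι → ℝ) {v w : ℝ}
    (hX : ∀ i ∈ s, MemLp (X i) 2 μ) (hw : 0 ≤ w)
    (hvar : ∀ i ∈ s, Var[X i; μ] ≤ v)
    (hcov : ∀ i ∈ s, ∀ j ∈ s, i ≠ j → |cov[X i, X j; μ]| ≤ w) :
    Var[fun ω ↦ ∑ i ∈ s, a i * X i ω; μ] ≤ v * ∑ i ∈ s, a i ^ 2 + w * (∑ i ∈ s, |a i|) ^ 2 := by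
  classical
  have hpair : ∀ i ∈ s, ∀ j ∈ s, a i * a j * cov[X i, X j; μ]
      ≤ (if i = j then v * a i ^ 2 else 0) + w * (|a i| * |a j|) := by
    intro i hi j hj
    split_ifs with hij
    · subst hij
      rw [covariance_self (hX i hi).aemeasurable]
      nlinarith [hvar i hi, sq_nonneg (a i), mul_nonneg hw (mul_nonneg (abs_nonneg (a i))
        (abs_nonneg (a i)))]
    · calc a i * a j * cov[X i, X j; μ] ≤ |a i * a j| * |cov[X i, X j; μ]| := by
            rw [← abs_mul]; exact le_abs_self _
        _ ≤ |a i * a j| * w := by gcongr; exact hcov i hi j hj hij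
        _ = 0 + w * (|a i| * |a j|) := by rw [abs_mul]; ring
  calc Var[fun ω ↦ ∑ i ∈ s, a i * X i ω; μ]
      = ∑ i ∈ s, ∑ j ∈ s, a i * a j * cov[X i, X j; μ] := by
        rw [variance_fun_sum' fun i hi ↦ (hX i hi).const_mul (a i)]
        refine sum_congr rfl fun i _ ↦ sum_congr rfl fun j _ ↦ ?_
        rw [covariance_const_mul_left, covariance_const_mul_right, mul_assoc]
    _ ≤ ∑ i ∈ s, ∑ j ∈ s, ((if i = j then v * a i ^ 2 else 0) + w * (|a i| * |a j|)) :=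
        sum_le_sum fun i hi ↦ sum_le_sum fun j hj ↦ hpair i hi j hj
    _ = v * ∑ i ∈ s, a i ^ 2 + w * (∑ i ∈ s, |a i|) ^ 2 := by
        simp only [sum_add_distrib, sum_ite_eq, ← mul_sum, sq (∑ i ∈ s, |a i|), sum_mul_sum]
        simp [mul_sum]

end VarianceBound

lemma inv_sq_le_inv_sub_one_sub_inv {y : ℝ} (hy : 1 < y) : (y ^ 2)⁻¹ ≤ (y - 1)⁻¹ - y⁻¹ := by
  have hy1 : 0 < y - 1 := by linarith
  rw [inv_sub_inv hy1.ne' (by positivity), sub_sub_cancel, one_div, sq]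
  gcongr
  linarith

lemma inv_le_log_sub_log_sub_one {y : ℝ} (hy : 1 < y) : y⁻¹ ≤ log y - log (y - 1) := by
  have hy1 : 0 < y - 1 := by linarith
  have h := one_sub_inv_le_log_of_pos (div_pos (by linarith) hy1 : 0 < y / (y - 1))
  rw [log_div (by positivity) hy1.ne', inv_div] at h
  calc y⁻¹ = 1 - (y - 1) / y := by field_simp; ring
    _ ≤ log y - log (y - 1) := h

section WeightSums

variable {x ξ : ℝ} {m : ℕ}

lemma sum_Icc_inv_sq_sub_le (hm : (m : ℝ) < x) :
    ∑ j ∈ Icc 1 m, ((x - j + 1) ^ 2)⁻¹ ≤ (x - m)⁻¹ - x⁻¹ := by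
  induction m with
  | zero => simp
  | succ m ih =>
    rw [Nat.cast_succ] at hm ⊢
    rw [sum_Icc_succ_top (by omega), Nat.cast_succ, show x - (m + 1) + 1 = x - m by ring,
      show x - (m + 1) = x - m - 1 by ring]
    linarith [ih (by linarith), inv_sq_le_inv_sub_one_sub_inv (y := x - m) (by linarith)]

lemma sum_Icc_inv_sub_le_log (hm : (m : ℝ) < x) :
    ∑ j ∈ Icc 1 m, (x - j + 1)⁻¹ ≤ log x - log (x - m) := by
  induction m with
  | zero => simp
  | succ m ih =>
    rw [Nat.cast_succ] at hm ⊢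
    rw [sum_Icc_succ_top (by omega), Nat.cast_succ, show x - (m + 1) + 1 = x - m by ring,
      show x - (m + 1) = x - m - 1 by ring]
    linarith [ih (by linarith), inv_le_log_sub_log_sub_one (y := x - m) (by linarith)]

lemma inv_one_sub_sub_one_div (hx : x ≠ 0) (t : ℝ) : (1 - (t - 1) / x)⁻¹ = x * (x - t + 1)⁻¹ := by
  rw [one_sub_div hx, inv_div, div_eq_mul_inv]
  ring_nf

lemma sum_Icc_inv_one_sub_div_sq_le (hx : 0 < x) (hξ : ξ < 1) (hm : (m : ℝ) ≤ x * ξ) :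
    ∑ j ∈ Icc 1 m, ((1 - ((j : ℝ) - 1) / x)⁻¹) ^ 2 ≤ x / (1 - ξ) := by
  have hxm : 0 < x * (1 - ξ) := mul_pos hx (by linarith)
  have hmx : (m : ℝ) < x := by nlinarith
  calc ∑ j ∈ Icc 1 m, ((1 - ((j : ℝ) - 1) / x)⁻¹) ^ 2
      = x ^ 2 * ∑ j ∈ Icc 1 m, ((x - j + 1) ^ 2)⁻¹ := by
        simp only [inv_one_sub_sub_one_div hx.ne', mul_sum, mul_pow, inv_pow]
    _ ≤ x ^ 2 * ((x - m)⁻¹ - x⁻¹) := by gcongr; exact sum_Icc_inv_sq_sub_le hmx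
    _ ≤ x ^ 2 * (x * (1 - ξ))⁻¹ := by
        have : (x - m)⁻¹ ≤ (x * (1 - ξ))⁻¹ := by gcongr; linarith
        gcongr
        linarith [inv_pos.2 hx]
    _ = x / (1 - ξ) := by field_simp

lemma sum_Icc_abs_inv_one_sub_div_le (hx : 0 < x) (hξ : ξ < 1) (hm : (m : ℝ) ≤ x * ξ) :
    ∑ j ∈ Icc 1 m, |(1 - ((j : ℝ) - 1) / x)⁻¹| ≤ x * -log (1 - ξ) := by
  have hxm : 0 < x * (1 - ξ) := mul_pos hx (by linarith)
  have hmx : (m : ℝ) < x := by nlinarith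
  have hpos : ∀ j ∈ Icc 1 m, 0 < x - j + 1 := fun j hj ↦ by
    have : (j : ℝ) ≤ m := by exact_mod_cast (mem_Icc.1 hj).2
    linarith
  calc ∑ j ∈ Icc 1 m, |(1 - ((j : ℝ) - 1) / x)⁻¹|
      = x * ∑ j ∈ Icc 1 m, (x - j + 1)⁻¹ := by
        rw [mul_sum]
        refine sum_congr rfl fun j hj ↦ ?_
        rw [inv_one_sub_sub_one_div hx.ne', abs_of_pos (mul_pos hx (inv_pos.2 (hpos j hj)))]
    _ ≤ x * (log x - log (x * (1 - ξ))) := by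
        gcongr
        calc _ ≤ log x - log (x - m) := sum_Icc_inv_sub_le_log hmx
          _ ≤ _ := by gcongr; linarith
    _ = x * -log (1 - ξ) := by
        rw [log_mul hx.ne' (by linarith)]
        ring

end WeightSums

theorem stmt_9_general {Ω : Type*} [MeasurableSpace Ω] (μ : MeasureTheory.Measure Ω)
    [MeasureTheory.IsProbabilityMeasure μ]
    (n : ℕ) (hn : 2 ≤ n) (ξs ξ α C ε : ℝ)
    (hξs : ξs ∈ Set.Ioo (0 : ℝ) 1) (hξ : ξ ∈ Set.Ioc (0 : ℝ) ξs)
    (hC : 0 < C) (hε : 0 < ε)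
    (z : ℕ → Ω → ℝ)
    (hz : ∀ j, MeasureTheory.MemLp (z j) 2 μ)
    (hvar : ∀ j ∈ Finset.Icc 1 ⌊(n : ℝ) * ξ⌋₊,
      (∫ ω, (z j ω - ∫ ω', z j ω' ∂μ) ^ 2 ∂μ) ≤ C * ε / n)
    (hcov : ∀ j ∈ Finset.Icc 1 ⌊(n : ℝ) * ξ⌋₊, ∀ k ∈ Finset.Icc 1 ⌊(n : ℝ) * ξ⌋₊,
      j ≠ k →
      |∫ ω, (z j ω - ∫ ω', z j ω' ∂μ) * (z k ω - ∫ ω', z k ω' ∂μ) ∂μ| ≤ C * ε / n ^ 2) :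
    (∫ ω, ((1 - α / 2) * ∑ j ∈ Finset.Icc 1 ⌊(n : ℝ) * ξ⌋₊, z j ω / (1 - ((j : ℝ) - 1) / n)
        - ∫ ω', (1 - α / 2) *
            ∑ j ∈ Finset.Icc 1 ⌊(n : ℝ) * ξ⌋₊, z j ω' / (1 - ((j : ℝ) - 1) / n) ∂μ) ^ 2 ∂μ)
      ≤ (1 - α / 2) ^ 2 * C * ε * (1 / (1 - ξ) + Real.log (1 - ξ) ^ 2) := by
  set m := ⌊(n : ℝ) * ξ⌋₊
  set a : ℕ → ℝ := fun j ↦ (1 - ((j : ℝ) - 1) / n)⁻¹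
  have hn0 : (0 : ℝ) < n := Nat.cast_pos.2 (by omega)
  have hξ1 : ξ < 1 := hξ.2.trans_lt hξs.2
  have hm : (m : ℝ) ≤ n * ξ := Nat.floor_le (by nlinarith [hξ.1])
  have hzm := fun j ↦ (hz j).aemeasurable
  -- `hcov` is stated for `cov[z j, z k; μ]` unfolded, so it applies as is.
  have hsum : Var[fun ω ↦ ∑ j ∈ Icc 1 m, a j * z j ω; μ]
      ≤ C * ε / n * ∑ j ∈ Icc 1 m, a j ^ 2 + C * ε / n ^ 2 * (∑ j ∈ Icc 1 m, |a j|) ^ 2 :=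
    variance_fun_sum_mul_le _ z a (fun j _ ↦ hz j) (by positivity)
      (fun j hj ↦ (variance_eq_integral (hzm j)).trans_le (hvar j hj)) hcov
  have hsq := sum_Icc_inv_one_sub_div_sq_le hn0 hξ1 hm
  have habs := sum_Icc_abs_inv_one_sub_div_le hn0 hξ1 hm
  simp only [div_eq_inv_mul (z _ _)]
  rw [← variance_eq_integral (by fun_prop), variance_const_mul, mul_assoc, mul_assoc]
  gcongr
  calc _ ≤ _ := hsum
    _ ≤ C * ε / n * (n / (1 - ξ)) + C * ε / n ^ 2 * (n * -log (1 - ξ)) ^ 2 := by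
        gcongr
    _ = C * (ε * (1 / (1 - ξ) + log (1 - ξ) ^ 2)) := by field_simp

/-- Variance bound for the weighted sum `(1-α/2) Σ_{j=1}^{⌊nξ⌋} z_j/(1-(j-1)/n)` of
random variables with `Var[z_j] ≤ Cε/n` and `|Cov(z_j,z_k)| ≤ Cε/n²`:
the variance is at most `(1-α/2)² C ε (1/(1-ξ) + (log(1-ξ))²)`. Variance and
covariance are written as integrals of products of centered variables. -/
theorem stmt_9 {Ω : Type*} [MeasurableSpace Ω] (μ : MeasureTheory.Measure Ω)
    [MeasureTheory.IsProbabilityMeasure μ]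
    (n : ℕ) (hn : 2 ≤ n) (ξs ξ α C ε : ℝ)
    (hξs : ξs ∈ Set.Ioo (0 : ℝ) 1) (hξ : ξ ∈ Set.Ioc (0 : ℝ) ξs)
    (hα : α ∈ Set.Icc (0 : ℝ) 2) (hC : 0 < C) (hε : 0 < ε)
    (z : ℕ → Ω → ℝ)
    (hz : ∀ j, MeasureTheory.MemLp (z j) 2 μ)
    (hvar : ∀ j ∈ Finset.Icc 1 ⌊(n : ℝ) * ξ⌋₊,
      (∫ ω, (z j ω - ∫ ω', z j ω' ∂μ) ^ 2 ∂μ) ≤ C * ε / n)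
    (hcov : ∀ j ∈ Finset.Icc 1 ⌊(n : ℝ) * ξ⌋₊, ∀ k ∈ Finset.Icc 1 ⌊(n : ℝ) * ξ⌋₊,
      j ≠ k →
      |∫ ω, (z j ω - ∫ ω', z j ω' ∂μ) * (z k ω - ∫ ω', z k ω' ∂μ) ∂μ| ≤ C * ε / n ^ 2) :
    (∫ ω, ((1 - α / 2) * ∑ j ∈ Finset.Icc 1 ⌊(n : ℝ) * ξ⌋₊, z j ω / (1 - ((j : ℝ) - 1) / n)
        - ∫ ω', (1 - α / 2) *
            ∑ j ∈ Finset.Icc 1 ⌊(n : ℝ) * ξ⌋₊, z j ω' / (1 - ((j : ℝ) - 1) / n) ∂μ) ^ 2 ∂μ)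
      ≤ (1 - α / 2) ^ 2 * C * ε * (1 / (1 - ξ) + Real.log (1 - ξ) ^ 2) :=
  stmt_9_general μ n hn ξs ξ α C ε hξs hξ hC hε z hz hvar hcov
end

section
/- Let α ∈ (0,2), define φ_α(ξ) = (1 - α/2) log(1/(1-ξ)) + α ξ on [0,1), let F_α = φ_α^{-1} : [0,∞) → [0,1) be its inverse, and let f_α(x) = 1/φ_α'(F_α(x)). Define Π(u) = (1-u) exp(-u/(1-u)) for u ∈ [0,1). Then for all x, y, x', y' ≥ 0 with x + y = x' + y', f_α(x') f_α(y') Π(α f_α(x)) Π(α f_α(y)) = f_α(x) f_α(y) Π(α f_α(x')) Π(α f_α(y')). -/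
/-! With `β = 1 - α/2` and `ξ = F_α(x)`, one computes `f_α(x) = (1 - ξ)/(β + α(1 - ξ))` and
`Π(α f_α(x)) = β e^{-α/β} f_α(x) e^{x/β}`. Hence `Π(α f_α)/f_α` is exponential in the energy,
and detailed balance reduces to `e^{(x+y)/β} = e^{(x'+y')/β}`. -/

lemma hasDerivAt_mul_log_one_div_one_sub_add_mul (α β : ℝ) {ξ : ℝ} (hξ : ξ ≠ 1) :
    HasDerivAt (fun t => β * Real.log (1 / (1 - t)) + α * t) (β / (1 - ξ) + α) ξ := by
  have h1ξ : 1 - ξ ≠ 0 := sub_ne_zero.mpr hξ.symm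
  have hlog : HasDerivAt (fun t : ℝ => Real.log (1 - t)) (-1 / (1 - ξ)) ξ :=
    ((hasDerivAt_id ξ).const_sub 1).log h1ξ
  have hsum : HasDerivAt (fun t => β * -Real.log (1 - t) + α * t)
      (β * -(-1 / (1 - ξ)) + α * 1) ξ :=
    (hlog.neg.const_mul β).add ((hasDerivAt_id' ξ).const_mul α)
  simp only [one_div, Real.log_inv]
  convert hsum using 1
  ring

lemma exclusion_factor_eq_mul_exp {α β ξ x : ℝ} (hα : 0 ≤ α) (hβ : 0 < β) (hξ : ξ < 1)
    (hx : β * Real.log (1 / (1 - ξ)) + α * ξ = x) :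
    (1 - α * (1 / (β / (1 - ξ) + α))) * Real.exp (-(α * (1 / (β / (1 - ξ) + α)) /
        (1 - α * (1 / (β / (1 - ξ) + α)))))
      = β * Real.exp (-α / β) * (1 / (β / (1 - ξ) + α)) * Real.exp (β⁻¹ * x) := by
  have h1ξ : 0 < 1 - ξ := by linarith
  have hβ0 : β ≠ 0 := hβ.ne'
  have hD : 0 < β + α * (1 - ξ) := by positivity
  have hdensity : 1 / (β / (1 - ξ) + α) = (1 - ξ) / (β + α * (1 - ξ)) := by
    field_simp
  have hcomplement : 1 - α * ((1 - ξ) / (β + α * (1 - ξ))) = β / (β + α * (1 - ξ)) := by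
    field_simp
    ring
  have hexp : Real.exp (β⁻¹ * x) = (1 - ξ)⁻¹ * Real.exp (α * ξ / β) := by
    rw [← hx, one_div, Real.log_inv, ← Real.exp_log h1ξ, ← Real.exp_neg, ← Real.exp_add,
      Real.exp_log h1ξ]
    congr 1
    field_simp
  have hexponent : -(α * ((1 - ξ) / (β + α * (1 - ξ))) / (β / (β + α * (1 - ξ))))
      = -α / β + α * ξ / β := by
    field_simp
    ring
  rw [hdensity, hcomplement, hexp, hexponent, Real.exp_add]
  field_simp

lemma detailed_balance_of_eq_mul_exp {g P : ℝ → ℝ} {s : Set ℝ} {c k : ℝ}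
    (hP : ∀ z ∈ s, P z = c * g z * Real.exp (k * z)) {x y x' y' : ℝ}
    (hx : x ∈ s) (hy : y ∈ s) (hx' : x' ∈ s) (hy' : y' ∈ s) (hsum : x + y = x' + y') :
    g x' * g y' * P x * P y = g x * g y * P x' * P y' := by
  have hexp : Real.exp (k * x) * Real.exp (k * y) = Real.exp (k * x') * Real.exp (k * y') := by
    rw [← Real.exp_add, ← Real.exp_add, ← mul_add, ← mul_add, hsum]
  rw [hP x hx, hP y hy, hP x' hx', hP y' hy']
  linear_combination c ^ 2 * g x * g y * g x' * g y' * hexp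

/-- Pointwise detailed balance for the equilibrium density `f_α` of the Kac model with
exclusion: for energy-conserving collisions `x + y = x' + y'`,
`f_α(x')f_α(y')Π(αf_α(x))Π(αf_α(y)) = f_α(x)f_α(y)Π(αf_α(x'))Π(αf_α(y'))`,
where `Π(u) = (1-u)exp(-u/(1-u))`, `f_α = 1/φ_α'(F_α(·))` and `F_α = φ_α⁻¹`. -/
theorem stmt_13 (α : ℝ) (hα : α ∈ Set.Ioo (0 : ℝ) 2)
    (φ : ℝ → ℝ) (hφ : ∀ ξ, φ ξ = (1 - α / 2) * Real.log (1 / (1 - ξ)) + α * ξ)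
    (F : ℝ → ℝ) (hF : ∀ x ∈ Set.Ici (0 : ℝ), F x ∈ Set.Ico (0 : ℝ) 1 ∧ φ (F x) = x)
    (f : ℝ → ℝ) (hf : ∀ x, f x = 1 / deriv φ (F x))
    (Pex : ℝ → ℝ) (hPex : ∀ u, Pex u = (1 - u) * Real.exp (-(u / (1 - u)))) :
    ∀ x y x' y' : ℝ, 0 ≤ x → 0 ≤ y → 0 ≤ x' → 0 ≤ y' → x + y = x' + y' →
      f x' * f y' * Pex (α * f x) * Pex (α * f y)
        = f x * f y * Pex (α * f x') * Pex (α * f y') := by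
  intro x y x' y' hx hy hx' hy' hsum
  have hβ : 0 < 1 - α / 2 := by linarith [hα.2]
  refine detailed_balance_of_eq_mul_exp (P := fun z => Pex (α * f z)) (s := Set.Ici 0)
    (c := (1 - α / 2) * Real.exp (-α / (1 - α / 2))) (k := (1 - α / 2)⁻¹) (fun z hz => ?_)
    hx hy hx' hy' hsum
  obtain ⟨⟨-, hξ⟩, hφξ⟩ := hF z hz
  have hfz : f z = 1 / ((1 - α / 2) / (1 - F z) + α) := by
    rw [hf, funext hφ, (hasDerivAt_mul_log_one_div_one_sub_add_mul α _ hξ.ne).deriv]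
  rw [hPex, hfz]
  exact exclusion_factor_eq_mul_exp hα.1.le hβ hξ ((hφ _).symm.trans hφξ)
end

section
/- Let α ∈ (0,2), define φ_α(ξ) = (1 - α/2) log(1/(1-ξ)) + α ξ on [0,1), let F_α = φ_α^{-1} : [0,∞) → [0,1) be its inverse, and let f_α(x) = 1/φ_α'(F_α(x)). Define r(x) = -log(α f_α(x)) + log(1 - α f_α(x)) - α f_α(x)/(1 - α f_α(x)) for x ≥ 0. Then r is affine with slope 2/(2-α): for all x, y ≥ 0, r(x) - r(y) = (x - y) · 2/(2-α). -/
/-! With `A = 1 - α/2` and `B = 1 - F x`, one has `φ' = A/B + α` at `F x`, so `α f = αB/(A + αB)`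
and `r = log (A/α) - log B - αB/A`. The defining equation `φ (F x) = x` reads
`-A log B + α (1 - B) = x`, which turns this into `r x = log (A/α) + (x - α)/A`,
and `1/A = 2/(2-α)`. -/

open Real

theorem hasDerivAt_mul_log_one_div_one_sub_add (c a : ℝ) {u : ℝ} (hu : u < 1) :
    HasDerivAt (fun ξ => c * log (1 / (1 - ξ)) + a * ξ) (c / (1 - u) + a) u := by
  have hlog : HasDerivAt (fun ξ => log (1 - ξ)) (-1 / (1 - u)) u :=
    ((hasDerivAt_id u).const_sub 1).log (by simpa using (sub_pos.2 hu).ne')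
  have hfun : (fun ξ => c * log (1 / (1 - ξ)) + a * ξ) = fun ξ => -c * log (1 - ξ) + a * ξ := by
    funext ξ
    rw [one_div, log_inv]
    ring
  rw [hfun]
  exact ((hlog.const_mul (-c)).fun_add ((hasDerivAt_id' u).const_mul a)).congr_deriv (by ring)

theorem neg_log_add_log_one_sub_sub_div_one_sub {a c B t : ℝ} (ha : 0 < a) (hc : 0 < c)
    (hB : 0 < B) (ht : t = a / (c / B + a)) :
    -log t + log (1 - t) - t / (1 - t) = log (c / a) - log B - a * B / c := by
  have hS : 0 < c + a * B := by positivity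
  have ht' : t = a * B / (c + a * B) := by rw [ht]; field_simp
  have hone_sub : 1 - t = c / (c + a * B) := by rw [ht']; field_simp; ring
  have hratio : t / (1 - t) = a * B / c := by rw [hone_sub, ht']; field_simp
  rw [hratio, hone_sub, ht', log_div hc.ne' hS.ne', log_div (by positivity) hS.ne',
    log_mul ha.ne' hB.ne', log_div hc.ne' ha.ne']
  ring

/-- The function `r(x) = -log(αf_α(x)) + log(1-αf_α(x)) - αf_α(x)/(1-αf_α(x))` built
from the equilibrium density `f_α` is affine with slope `2/(2-α)`:
`r(x) - r(y) = (x-y)·2/(2-α)` for all `x, y ≥ 0`. -/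
theorem stmt_14 (α : ℝ) (hα : α ∈ Set.Ioo (0 : ℝ) 2)
    (φ : ℝ → ℝ) (hφ : ∀ ξ, φ ξ = (1 - α / 2) * Real.log (1 / (1 - ξ)) + α * ξ)
    (F : ℝ → ℝ) (hF : ∀ x ∈ Set.Ici (0 : ℝ), F x ∈ Set.Ico (0 : ℝ) 1 ∧ φ (F x) = x)
    (f : ℝ → ℝ) (hf : ∀ x, f x = 1 / deriv φ (F x))
    (r : ℝ → ℝ)
    (hr : ∀ x, r x = -Real.log (α * f x) + Real.log (1 - α * f x)
      - α * f x / (1 - α * f x)) :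
    ∀ x y : ℝ, 0 ≤ x → 0 ≤ y → r x - r y = (x - y) * (2 / (2 - α)) := by
  obtain ⟨hα0, hα2⟩ := hα
  have hA : 0 < 1 - α / 2 := by linarith
  have hr_affine : ∀ x, 0 ≤ x → r x = log ((1 - α / 2) / α) + (x - α) / (1 - α / 2) := by
    intro x hx
    obtain ⟨⟨-, hu1⟩, hφx⟩ := hF x hx
    have hderiv : deriv φ (F x) = (1 - α / 2) / (1 - F x) + α := by
      rw [funext hφ]
      exact (hasDerivAt_mul_log_one_div_one_sub_add _ _ hu1).deriv
    have hαf : α * f x = α / ((1 - α / 2) / (1 - F x) + α) := by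
      rw [hf, hderiv, mul_one_div]
    rw [hφ, one_div, log_inv] at hφx
    rw [hr, neg_log_add_log_one_sub_sub_div_one_sub hα0 hA (sub_pos.2 hu1) hαf]
    field_simp
    linear_combination 2 * hφx
  intro x y hx hy
  rw [hr_affine x hx, hr_affine y hy]
  field_simp
  ring
end

section
/- Let α ∈ (0,2) and let g : [0,∞) → [0,∞) be measurable with α g(x) ≤ 1 for all x. With Π, x', y' and R_g defined as for the collision operator, assume ∫_0^∞ ∫_0^∞ ∫_{-1}^1 (1 + x + y) |R_g(x,y,ξ)| dξ dy dx < ∞, and let Q[g](x) = (1/2) ∫_0^∞ ∫_{-1}^1 R_g(x,y,ξ) dξ dy. Then for every measurable h : [0,∞) → ℝ satisfying |h(x)| ≤ C(1 + x) for some constant C, ∫_0^∞ h(x) Q[g](x) dx = (1/8) ∫_0^∞ ∫_0^∞ ∫_{-1}^1 R_g(x,y,ξ) · ( h(x) + h(y) - h(x') - h(y') ) dξ dy dx. -/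
open MeasureTheory Filter Set

/-! Write `x = (1 - η) s / 2`, `y = (1 + η) s / 2` with `s = x + y ≥ 0` and `η ∈ [-1, 1]`; this
change of variables has Jacobian `s / 2`, and the post-collision pair `(x', y')` is obtained from
`(x, y)` by exchanging `η` with the collision parameter `ξ`. The exchange `η ↔ ξ` therefore
preserves the measure on `[0, ∞)² × [-1, 1]` and, since it swaps the gain and loss terms, changes
the sign of `R_g`: hence `∫ R_g h(x') = -∫ R_g h(x)` and `∫ R_g h(y') = -∫ R_g h(y)`. The
reflection `η ↦ -η` swaps `x` and `y` and leaves `R_g` invariant, so `∫ R_g h(y) = ∫ R_g h(x)`.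
The right-hand side is thus `(1/8) · 4 ∫ R_g h(x)`, which is `∫ h Q[g]` by Fubini; the linear
growth of `h` together with the weighted integrability of `R_g` makes every term integrable. -/

theorem ContinuousLinearMap.det_real_prod_eq (L : ℝ × ℝ →L[ℝ] ℝ × ℝ) :
    L.det = (L (1, 0)).1 * (L (0, 1)).2 - (L (0, 1)).1 * (L (1, 0)).2 := by
  rw [ContinuousLinearMap.det, ← LinearMap.det_toMatrix (Module.Basis.finTwoProd ℝ),
    Matrix.det_fin_two]
  simp [LinearMap.toMatrix_apply, Module.Basis.coe_finTwoProd_repr]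

theorem MeasureTheory.setIntegral_prod_prod {α β γ E : Type*} [MeasurableSpace α]
    [MeasurableSpace β] [MeasurableSpace γ] [NormedAddCommGroup E] [NormedSpace ℝ E]
    {μ : Measure α} {ν : Measure β} {ρ : Measure γ} [SFinite μ] [SFinite ν] [SFinite ρ]
    (F : α × β × γ → E) {s : Set α} {t : Set β} {u : Set γ}
    (hF : IntegrableOn F (s ×ˢ t ×ˢ u) (μ.prod (ν.prod ρ))) :
    ∫ p in s ×ˢ t ×ˢ u, F p ∂μ.prod (ν.prod ρ)
      = ∫ x in s, ∫ y in t, ∫ z in u, F (x, y, z) ∂ρ ∂ν ∂μ := by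
  rw [setIntegral_prod F hF]
  rw [IntegrableOn, ← Measure.prod_restrict] at hF
  refine integral_congr_ae ?_
  filter_upwards [hF.prod_right_ae] with x hx
  exact setIntegral_prod _ hx

theorem MeasureTheory.Integrable.mul_of_abs_le_mul {α : Type*} [MeasurableSpace α] {μ : Measure α}
    {f w φ : α → ℝ} (hfw : Integrable (fun p => w p * |f p|) μ) (hf : AEStronglyMeasurable f μ)
    (hφ : AEStronglyMeasurable φ μ) {C : ℝ} (hb : ∀ᵐ p ∂μ, |φ p| ≤ C * w p) :
    Integrable (fun p => f p * φ p) μ := by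
  refine (hfw.const_mul C).mono' (hf.mul hφ) (hb.mono fun p hp => ?_)
  calc ‖f p * φ p‖ = |f p| * |φ p| := by rw [Real.norm_eq_abs, abs_mul]
    _ ≤ |f p| * (C * w p) := mul_le_mul_of_nonneg_left hp (abs_nonneg _)
    _ = C * (w p * |f p|) := by ring

theorem MeasureTheory.measurePreserving_prodMap_id {α β γ : Type*} [MeasureSpace α]
    [MeasureSpace β] [MeasureSpace γ] [SFinite (volume : Measure α)] [SFinite (volume : Measure β)]
    [SFinite (volume : Measure γ)] {f : β → γ} (hf : MeasurePreserving f volume volume) :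
    MeasurePreserving (Prod.map (id : α → α) f) volume volume := by
  rw [Measure.volume_eq_prod]
  exact (MeasurePreserving.id volume).prod hf

namespace KacCollision

noncomputable def splitPlane (r : ℝ × ℝ) : ℝ × ℝ := ((1 - r.2) * r.1 / 2, (1 + r.2) * r.1 / 2)

noncomputable def splitPlaneDeriv (r : ℝ × ℝ) : ℝ × ℝ →L[ℝ] ℝ × ℝ :=
  (((1 - r.2) / 2) • ContinuousLinearMap.fst ℝ ℝ ℝ - (r.1 / 2) • ContinuousLinearMap.snd ℝ ℝ ℝ).prod
    (((1 + r.2) / 2) • ContinuousLinearMap.fst ℝ ℝ ℝ + (r.1 / 2) • ContinuousLinearMap.snd ℝ ℝ ℝ)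

theorem hasFDerivAt_splitPlane (r : ℝ × ℝ) : HasFDerivAt splitPlane (splitPlaneDeriv r) r := by
  have hfst := hasFDerivAt_fst (𝕜 := ℝ) (p := r) (E := ℝ) (F := ℝ)
  have hsnd := hasFDerivAt_snd (𝕜 := ℝ) (p := r) (E := ℝ) (F := ℝ)
  refine HasFDerivAt.prodMk ?_ ?_
  · refine ((((hasFDerivAt_const 1 r).sub hsnd).mul hfst).mul_const (1 / 2 : ℝ)).congr_fderiv
      ?_ |>.congr_of_eventuallyEq
        (Eventually.of_forall fun q => by simp only [Pi.mul_apply, Pi.sub_apply]; ring)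
    ext <;> simp [div_eq_inv_mul]
  · refine ((((hasFDerivAt_const 1 r).add hsnd).mul hfst).mul_const (1 / 2 : ℝ)).congr_fderiv
      ?_ |>.congr_of_eventuallyEq
        (Eventually.of_forall fun q => by simp only [Pi.mul_apply, Pi.add_apply]; ring)
    ext <;> simp [div_eq_inv_mul]

theorem det_splitPlaneDeriv (r : ℝ × ℝ) : (splitPlaneDeriv r).det = r.1 / 2 := by
  simp only [ContinuousLinearMap.det_real_prod_eq, splitPlaneDeriv, ContinuousLinearMap.prod_apply,
    sub_apply, add_apply, smul_apply,
    ContinuousLinearMap.coe_fst', ContinuousLinearMap.coe_snd', smul_eq_mul]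
  ring

noncomputable def splitEnergy (p : ℝ × ℝ × ℝ) : ℝ × ℝ × ℝ :=
  ((1 - p.2.1) * p.1 / 2, (1 + p.2.1) * p.1 / 2, p.2.2)

noncomputable def splitEnergyDeriv (p : ℝ × ℝ × ℝ) : ℝ × ℝ × ℝ →L[ℝ] ℝ × ℝ × ℝ :=
  (ContinuousLinearEquiv.prodAssoc ℝ ℝ ℝ ℝ : (ℝ × ℝ) × ℝ →L[ℝ] ℝ × ℝ × ℝ) ∘L
    ((splitPlaneDeriv (p.1, p.2.1)).prodMap (ContinuousLinearMap.id ℝ ℝ)) ∘L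
    ((ContinuousLinearEquiv.prodAssoc ℝ ℝ ℝ ℝ).symm : ℝ × ℝ × ℝ →L[ℝ] (ℝ × ℝ) × ℝ)

theorem hasFDerivAt_splitEnergy (p : ℝ × ℝ × ℝ) :
    HasFDerivAt splitEnergy (splitEnergyDeriv p) p := by
  let e := ContinuousLinearEquiv.prodAssoc ℝ ℝ ℝ ℝ
  have hmap : HasFDerivAt (Prod.map splitPlane id)
      ((splitPlaneDeriv (p.1, p.2.1)).prodMap (ContinuousLinearMap.id ℝ ℝ)) (e.symm p) :=
    (hasFDerivAt_splitPlane (p.1, p.2.1)).prodMap (e.symm p) (hasFDerivAt_id _)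
  exact e.hasFDerivAt.comp p (hmap.comp p e.symm.hasFDerivAt)

theorem det_splitEnergyDeriv (p : ℝ × ℝ × ℝ) : (splitEnergyDeriv p).det = p.1 / 2 := by
  have h : (splitEnergyDeriv p : ℝ × ℝ × ℝ →ₗ[ℝ] ℝ × ℝ × ℝ) =
      (LinearEquiv.prodAssoc ℝ ℝ ℝ ℝ : (ℝ × ℝ) × ℝ →ₗ[ℝ] ℝ × ℝ × ℝ) ∘ₗ
        ((splitPlaneDeriv (p.1, p.2.1) : ℝ × ℝ →ₗ[ℝ] ℝ × ℝ).prodMap LinearMap.id) ∘ₗ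
        ((LinearEquiv.prodAssoc ℝ ℝ ℝ ℝ).symm : ℝ × ℝ × ℝ →ₗ[ℝ] (ℝ × ℝ) × ℝ) := rfl
  rw [ContinuousLinearMap.det, h, LinearMap.det_conj, LinearMap.det_prodMap, LinearMap.det_id,
    mul_one, ← ContinuousLinearMap.det, det_splitPlaneDeriv]

theorem injOn_splitEnergy : InjOn splitEnergy (Ioi 0 ×ˢ univ) := by
  rintro ⟨s, η, ξ⟩ ⟨hs, -⟩ ⟨t, η', ξ'⟩ - heq
  simp only [splitEnergy, Prod.mk.injEq] at heq
  obtain ⟨hx, hy, rfl⟩ := heq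
  have hst : s = t := by linear_combination hx + hy
  subst hst
  have hη : (η' - η) * s = 0 := by linear_combination hx - hy
  rw [sub_eq_zero.1 ((mul_eq_zero.1 hη).resolve_right hs.ne')]

def collisionDomain : Set (ℝ × ℝ × ℝ) := Ici 0 ×ˢ Ici 0 ×ˢ Icc (-1) 1

def splitDomain : Set (ℝ × ℝ × ℝ) := Ioi 0 ×ˢ Icc (-1) 1 ×ˢ Icc (-1) 1

theorem measurableSet_collisionDomain : MeasurableSet collisionDomain :=
  measurableSet_Ici.prod (measurableSet_Ici.prod measurableSet_Icc)

theorem measurableSet_splitDomain : MeasurableSet splitDomain :=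
  measurableSet_Ioi.prod (measurableSet_Icc.prod measurableSet_Icc)

theorem image_splitEnergy :
    splitEnergy '' splitDomain = collisionDomain \ ({0} ×ˢ {0} ×ˢ univ) := by
  ext ⟨x, y, ξ⟩
  simp only [collisionDomain, splitDomain, splitEnergy, mem_image, Set.mem_sdiff, mem_prod,
    mem_Ioi, mem_Ici, mem_Icc, mem_singleton_iff, mem_univ, and_true, Prod.mk.injEq, Prod.exists,
    not_and]
  constructor
  · rintro ⟨s, η, ξ, ⟨hs, ⟨hη₁, hη₂⟩, hξ⟩, rfl, rfl, rfl⟩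
    refine ⟨⟨by nlinarith, by nlinarith, hξ⟩, fun hx hy => ?_⟩
    nlinarith
  · rintro ⟨⟨hx, hy, hξ⟩, hxy⟩
    have hs : 0 < x + y := by
      by_contra! h
      exact hxy (by linarith) (by linarith)
    refine ⟨x + y, (y - x) / (x + y), ξ, ⟨hs, ⟨?_, ?_⟩, hξ⟩, ?_, ?_, rfl⟩
    · rw [le_div_iff₀ hs]; linarith
    · rw [div_le_one hs]; linarith
    · field_simp; ring
    · field_simp; ring

theorem collisionDomain_ae_eq_image_splitEnergy :
    collisionDomain =ᵐ[volume] splitEnergy '' splitDomain := by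
  rw [image_splitEnergy]
  refine (sdiff_ae_eq_self.2 (measure_mono_null inter_subset_right ?_)).symm
  rw [Measure.volume_eq_prod, Measure.prod_prod, Real.volume_singleton, zero_mul]

section

variable {E : Type*} [NormedAddCommGroup E] [NormedSpace ℝ E]

theorem setIntegral_collisionDomain_eq_splitEnergy (F : ℝ × ℝ × ℝ → E) :
    ∫ p in collisionDomain, F p = ∫ q in splitDomain, |q.1 / 2| • F (splitEnergy q) := by
  -- instance search does not see through the nested product measure
  have : (volume : Measure (ℝ × ℝ × ℝ)).IsAddHaarMeasure := by
    rw [Measure.volume_eq_prod]; infer_instance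
  rw [Measure.restrict_congr_set collisionDomain_ae_eq_image_splitEnergy,
    integral_image_eq_integral_abs_det_fderiv_smul (volume : Measure (ℝ × ℝ × ℝ))
      measurableSet_splitDomain
      (fun q _ => (hasFDerivAt_splitEnergy q).hasFDerivWithinAt)
      (injOn_splitEnergy.mono (prod_mono_right (subset_univ _)))]
  simp only [det_splitEnergyDeriv]

theorem setIntegral_collisionDomain_congr_splitEnergy
    (σ : (ℝ × ℝ × ℝ) ≃ᵐ (ℝ × ℝ × ℝ)) (hσ : MeasurePreserving σ volume volume)
    (hσD : σ ⁻¹' splitDomain = splitDomain)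
    (hσ₁ : ∀ q, (σ q).1 = q.1) {F G : ℝ × ℝ × ℝ → E}
    (hFG : ∀ q ∈ splitDomain, F (splitEnergy (σ q)) = G (splitEnergy q)) :
    ∫ p in collisionDomain, F p = ∫ p in collisionDomain, G p := by
  rw [setIntegral_collisionDomain_eq_splitEnergy, setIntegral_collisionDomain_eq_splitEnergy,
    ← hσ.setIntegral_preimage_emb σ.measurableEmbedding, hσD]
  refine setIntegral_congr_fun measurableSet_splitDomain fun q hq => ?_
  rw [hσ₁, hFG q hq]

theorem setIntegral_collisionDomain_swap (F : ℝ × ℝ × ℝ → E) :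
    ∫ p in collisionDomain, F (p.2.1, p.1, p.2.2) = ∫ p in collisionDomain, F p := by
  let σ : (ℝ × ℝ × ℝ) ≃ᵐ (ℝ × ℝ × ℝ) :=
    (MeasurableEquiv.refl ℝ).prodCongr ((MeasurableEquiv.neg ℝ).prodCongr (MeasurableEquiv.refl ℝ))
  have hσ : MeasurePreserving σ volume volume :=
    measurePreserving_prodMap_id (by
      rw [Measure.volume_eq_prod]
      exact (Measure.measurePreserving_neg volume).prod (MeasurePreserving.id volume))
  have hσq : ∀ q, σ q = (q.1, -q.2.1, q.2.2) := fun _ => rfl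
  refine setIntegral_collisionDomain_congr_splitEnergy σ hσ ?_ (fun _ => rfl) fun q _ => ?_
  · ext ⟨s, η, ξ⟩
    simp only [splitDomain, hσq, mem_preimage, mem_prod, mem_Ioi, mem_Icc, neg_le, neg_neg]
    tauto
  · rw [hσq]
    simp only [splitEnergy, sub_neg_eq_add, ← sub_eq_add_neg]

end

theorem setIntegral_collisionDomain_mul_post_eq_neg (f : ℝ × ℝ × ℝ → ℝ)
    (hf : ∀ s η ξ, f (splitEnergy (s, ξ, η)) = -f (splitEnergy (s, η, ξ))) (φ : ℝ → ℝ → ℝ) :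
    ∫ p in collisionDomain,
        f p * φ ((1 - p.2.2) * (p.1 + p.2.1) / 2) ((1 + p.2.2) * (p.1 + p.2.1) / 2)
      = -∫ p in collisionDomain, f p * φ p.1 p.2.1 := by
  rw [← integral_neg]
  let σ : (ℝ × ℝ × ℝ) ≃ᵐ (ℝ × ℝ × ℝ) := (MeasurableEquiv.refl ℝ).prodCongr MeasurableEquiv.prodComm
  have hσ : MeasurePreserving σ volume volume := by
    refine measurePreserving_prodMap_id ?_
    rw [Measure.volume_eq_prod]
    exact Measure.measurePreserving_swap
  have hσq : ∀ q, σ q = (q.1, q.2.2, q.2.1) := fun _ => rfl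
  refine setIntegral_collisionDomain_congr_splitEnergy σ hσ ?_ (fun _ => rfl) fun q _ => ?_
  · ext ⟨s, η, ξ⟩
    simp only [splitDomain, hσq, mem_preimage, mem_prod, mem_Ioi, mem_Icc]
    tauto
  · obtain ⟨s, η, ξ⟩ := q
    have hsum : ∀ t : ℝ, (1 - t) * s / 2 + (1 + t) * s / 2 = s := fun t => by ring
    simp only [hσq]
    rw [hf]
    simp only [splitEnergy, hsum, neg_mul]

theorem integrableOn_collisionDomain_mul_comp {f : ℝ × ℝ × ℝ → ℝ} (hfm : Measurable f)
    (hint : Integrable (fun p => (1 + p.1 + p.2.1) * |f p|) (volume.restrict collisionDomain))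
    {h : ℝ → ℝ} (hhm : Measurable h) {C : ℝ} (hhC : ∀ x, 0 ≤ x → |h x| ≤ C * (1 + x))
    {a : ℝ × ℝ × ℝ → ℝ} (ha : Measurable a)
    (hab : ∀ p ∈ collisionDomain, 0 ≤ a p ∧ a p ≤ p.1 + p.2.1) :
    IntegrableOn (fun p => f p * h (a p)) collisionDomain := by
  have hC : 0 ≤ C := (abs_nonneg _).trans (by simpa using hhC 0 le_rfl)
  refine Integrable.mul_of_abs_le_mul hint hfm.aestronglyMeasurable
    (hhm.comp ha).aestronglyMeasurable (C := C) ?_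
  filter_upwards [ae_restrict_mem measurableSet_collisionDomain] with p hp
  obtain ⟨ha₀, ha₁⟩ := hab p hp
  calc |h (a p)| ≤ C * (1 + a p) := hhC _ ha₀
    _ ≤ C * (1 + p.1 + p.2.1) := by nlinarith

theorem setIntegral_collisionDomain_weakForm (f : ℝ × ℝ × ℝ → ℝ)
    (hsym : ∀ x y ξ, f (y, x, ξ) = f (x, y, ξ))
    (hanti : ∀ s η ξ, f (splitEnergy (s, ξ, η)) = -f (splitEnergy (s, η, ξ))) (h : ℝ → ℝ)
    (hx : IntegrableOn (fun p => f p * h p.1) collisionDomain)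
    (hy : IntegrableOn (fun p => f p * h p.2.1) collisionDomain)
    (hx' : IntegrableOn (fun p => f p * h ((1 - p.2.2) * (p.1 + p.2.1) / 2)) collisionDomain)
    (hy' : IntegrableOn (fun p => f p * h ((1 + p.2.2) * (p.1 + p.2.1) / 2)) collisionDomain) :
    ∫ p in collisionDomain, f p * (h p.1 + h p.2.1 - h ((1 - p.2.2) * (p.1 + p.2.1) / 2)
        - h ((1 + p.2.2) * (p.1 + p.2.1) / 2))
      = 4 * ∫ p in collisionDomain, f p * h p.1 := by
  have ey : ∫ p in collisionDomain, f p * h p.2.1 = ∫ p in collisionDomain, f p * h p.1 := by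
    rw [← setIntegral_collisionDomain_swap]
    simp only [hsym]
  have ex' := setIntegral_collisionDomain_mul_post_eq_neg f hanti fun a _ => h a
  have ey' := setIntegral_collisionDomain_mul_post_eq_neg f hanti fun _ b => h b
  calc _ = ∫ p in collisionDomain, (f p * h p.1 + f p * h p.2.1
          - f p * h ((1 - p.2.2) * (p.1 + p.2.1) / 2)
          - f p * h ((1 + p.2.2) * (p.1 + p.2.1) / 2)) :=
        setIntegral_congr_fun measurableSet_collisionDomain fun p _ => by ring
    _ = 4 * ∫ p in collisionDomain, f p * h p.1 := by
        rw [integral_sub ?_ hy', integral_sub ?_ hx', integral_add hx hy, ex', ey', ey]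
        · ring
        · exact hx.add hy
        · exact (hx.add hy).sub hx'

theorem integral_weakForm_of_linearGrowth (R : ℝ → ℝ → ℝ → ℝ)
    (hRm : Measurable fun p : ℝ × ℝ × ℝ => R p.1 p.2.1 p.2.2)
    (hint : Integrable (fun p : ℝ × ℝ × ℝ => (1 + p.1 + p.2.1) * |R p.1 p.2.1 p.2.2|)
      (volume.restrict collisionDomain))
    (hsym : ∀ x y ξ, R y x ξ = R x y ξ)
    (hanti : ∀ s η ξ,
      R ((1 - ξ) * s / 2) ((1 + ξ) * s / 2) η = -R ((1 - η) * s / 2) ((1 + η) * s / 2) ξ)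
    {h : ℝ → ℝ} (hhm : Measurable h) {C : ℝ} (hhC : ∀ x, 0 ≤ x → |h x| ≤ C * (1 + x)) :
    ∫ x in Ici 0, ∫ y in Ici 0, ∫ ξ in Icc (-1) 1,
        R x y ξ * (h x + h y - h ((1 - ξ) * (x + y) / 2) - h ((1 + ξ) * (x + y) / 2))
      = 4 * ∫ x in Ici 0, ∫ y in Ici 0, ∫ ξ in Icc (-1) 1, R x y ξ * h x := by
  have hpost : ∀ p ∈ collisionDomain, (0 ≤ (1 - p.2.2) * (p.1 + p.2.1) / 2 ∧
      (1 - p.2.2) * (p.1 + p.2.1) / 2 ≤ p.1 + p.2.1) ∧ (0 ≤ (1 + p.2.2) * (p.1 + p.2.1) / 2 ∧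
      (1 + p.2.2) * (p.1 + p.2.1) / 2 ≤ p.1 + p.2.1) := by
    rintro p ⟨hx, hy, hξ₁, hξ₂⟩
    rw [mem_Ici] at hx hy
    refine ⟨⟨?_, ?_⟩, ?_, ?_⟩ <;> nlinarith
  have hx := integrableOn_collisionDomain_mul_comp hRm hint hhm hhC measurable_fst
    fun p ⟨hx, hy, _⟩ => ⟨hx, le_add_of_nonneg_right hy⟩
  have hy := integrableOn_collisionDomain_mul_comp hRm hint hhm hhC measurable_snd.fst
    fun p ⟨hx, hy, _⟩ => ⟨hy, le_add_of_nonneg_left hx⟩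
  have hx' := integrableOn_collisionDomain_mul_comp hRm hint hhm hhC (by fun_prop)
    fun p hp => (hpost p hp).1
  have hy' := integrableOn_collisionDomain_mul_comp hRm hint hhm hhC (by fun_prop)
    fun p hp => (hpost p hp).2
  have hsum : IntegrableOn (fun p => R p.1 p.2.1 p.2.2 * (h p.1 + h p.2.1
      - h ((1 - p.2.2) * (p.1 + p.2.1) / 2) - h ((1 + p.2.2) * (p.1 + p.2.1) / 2)))
      collisionDomain :=
    (((hx.add hy).sub hx').sub hy').congr_fun
      (fun p _ => by simp only [Pi.add_apply, Pi.sub_apply]; ring) measurableSet_collisionDomain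
  rw [← setIntegral_prod_prod _ hx, ← setIntegral_prod_prod _ hsum]
  exact setIntegral_collisionDomain_weakForm _ hsym hanti h hx hy hx' hy'

end KacCollision

open KacCollision

theorem stmt_16_general (α : ℝ)
    (g : ℝ → ℝ) (hgm : Measurable g)
    (Pex : ℝ → ℝ) (hPex : ∀ u, Pex u = (1 - u) * Real.exp (-(u / (1 - u))))
    (R : ℝ → ℝ → ℝ → ℝ)
    (hR : ∀ x y ξ, R x y ξ =
      g ((1 - ξ) * (x + y) / 2) * g ((1 + ξ) * (x + y) / 2) * Pex (α * g x) * Pex (α * g y)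
      - g x * g y * Pex (α * g ((1 - ξ) * (x + y) / 2)) * Pex (α * g ((1 + ξ) * (x + y) / 2)))
    (hint : MeasureTheory.Integrable
      (fun p : ℝ × ℝ × ℝ => (1 + p.1 + p.2.1) * |R p.1 p.2.1 p.2.2|)
      (MeasureTheory.volume.restrict
        ((Set.Ici (0 : ℝ)) ×ˢ (Set.Ici (0 : ℝ)) ×ˢ (Set.Icc (-1 : ℝ) 1))))
    (Q : ℝ → ℝ)
    (hQ : ∀ x, Q x = (1 / 2) *
      ∫ y in Set.Ici (0 : ℝ), (∫ ξ in Set.Icc (-1 : ℝ) 1, R x y ξ))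
    (h : ℝ → ℝ) (hhm : Measurable h) (C : ℝ)
    (hhC : ∀ x : ℝ, 0 ≤ x → |h x| ≤ C * (1 + x)) :
    (∫ x in Set.Ici (0 : ℝ), h x * Q x)
      = (1 / 8) * ∫ x in Set.Ici (0 : ℝ), (∫ y in Set.Ici (0 : ℝ),
          (∫ ξ in Set.Icc (-1 : ℝ) 1, R x y ξ *
            (h x + h y - h ((1 - ξ) * (x + y) / 2) - h ((1 + ξ) * (x + y) / 2)))) := by
  have hPm : Measurable Pex := by
    rw [funext hPex]
    fun_prop
  have hRm : Measurable fun p : ℝ × ℝ × ℝ => R p.1 p.2.1 p.2.2 := by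
    simp_rw [hR]
    fun_prop
  have hsym : ∀ x y ξ, R y x ξ = R x y ξ := fun x y ξ => by
    rw [hR, hR, add_comm y x]
    ring
  have hanti : ∀ s η ξ,
      R ((1 - ξ) * s / 2) ((1 + ξ) * s / 2) η = -R ((1 - η) * s / 2) ((1 + η) * s / 2) ξ := by
    intro s η ξ
    have hsum : ∀ t : ℝ, (1 - t) * s / 2 + (1 + t) * s / 2 = s := fun t => by ring
    rw [hR, hR, hsum, hsum]
    ring
  rw [integral_weakForm_of_linearGrowth R hRm hint hsym hanti hhm hhC, ← mul_assoc,
    ← integral_const_mul]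
  congr 1
  funext x
  simp only [hQ, integral_mul_const]
  ring

/-- Symmetrized weak form of the collision operator: for every measurable `h` with
`|h(x)| ≤ C(1+x)`,
`∫₀^∞ h Q[g] = (1/8)∫₀^∞∫₀^∞∫_{-1}^1 R_g(x,y,ξ)(h(x)+h(y)-h(x')-h(y')) dξ dy dx`. -/
theorem stmt_16 (α : ℝ) (hα : α ∈ Set.Ioo (0 : ℝ) 2)
    (g : ℝ → ℝ) (hgm : Measurable g) (hgnn : ∀ x : ℝ, 0 ≤ x → 0 ≤ g x)
    (hgle : ∀ x : ℝ, 0 ≤ x → α * g x ≤ 1)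
    (Pex : ℝ → ℝ) (hPex : ∀ u, Pex u = (1 - u) * Real.exp (-(u / (1 - u))))
    (R : ℝ → ℝ → ℝ → ℝ)
    (hR : ∀ x y ξ, R x y ξ =
      g ((1 - ξ) * (x + y) / 2) * g ((1 + ξ) * (x + y) / 2) * Pex (α * g x) * Pex (α * g y)
      - g x * g y * Pex (α * g ((1 - ξ) * (x + y) / 2)) * Pex (α * g ((1 + ξ) * (x + y) / 2)))
    (hint : MeasureTheory.Integrable
      (fun p : ℝ × ℝ × ℝ => (1 + p.1 + p.2.1) * |R p.1 p.2.1 p.2.2|)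
      (MeasureTheory.volume.restrict
        ((Set.Ici (0 : ℝ)) ×ˢ (Set.Ici (0 : ℝ)) ×ˢ (Set.Icc (-1 : ℝ) 1))))
    (Q : ℝ → ℝ)
    (hQ : ∀ x, Q x = (1 / 2) *
      ∫ y in Set.Ici (0 : ℝ), (∫ ξ in Set.Icc (-1 : ℝ) 1, R x y ξ))
    (h : ℝ → ℝ) (hhm : Measurable h) (C : ℝ)
    (hhC : ∀ x : ℝ, 0 ≤ x → |h x| ≤ C * (1 + x)) :
    (∫ x in Set.Ici (0 : ℝ), h x * Q x)
      = (1 / 8) * ∫ x in Set.Ici (0 : ℝ), (∫ y in Set.Ici (0 : ℝ),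
          (∫ ξ in Set.Icc (-1 : ℝ) 1, R x y ξ *
            (h x + h y - h ((1 - ξ) * (x + y) / 2) - h ((1 + ξ) * (x + y) / 2)))) :=
  stmt_16_general α g hgm Pex hPex R hR hint Q hQ h hhm C hhC
end

section
/- Let α ∈ (0,2), define φ_α(ξ) = (1 - α/2) log(1/(1-ξ)) + α ξ on [0,1), let F_α = φ_α^{-1}, f_α(x) = 1/φ_α'(F_α(x)), and Π(u) = (1-u) exp(-u/(1-u)). Then f_α is a stationary solution of the limiting Boltzmann equation: for every x ≥ 0, Q[f_α](x) = (1/2) ∫_0^∞ ∫_{-1}^1 [ f_α(x')f_α(y')Π(αf_α(x))Π(αf_α(y)) - f_α(x)f_α(y)Π(αf_α(x'))Π(αf_α(y')) ] dξ dy = 0, where x' = (1-ξ)(x+y)/2 and y' = (1+ξ)(x+y)/2. -/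
/-!
The collision integrand vanishes pointwise (detailed balance). Writing `a = 1 - α/2` and
`u = F_α(w)`, one computes `f_α(w) = (1-u)/(a + α(1-u))` and `α f_α / (1 - α f_α) = α(1-u)/a`,
so that `f_α(w) = (e^{α/a}/a) e^{-w/a} Π(α f_α(w))`: the density is a Gibbs factor times the
exclusion factor. Since `x' + y' = x + y`, the Gibbs factors of both gain and loss terms agree.
-/

open MeasureTheory Filter Set Real

theorem collision_integrand_eq_zero {f P : ℝ → ℝ} {c b x y x' y' : ℝ}
    (hf : ∀ z, 0 ≤ z → f z = c * exp (b * z) * P z)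
    (hx : 0 ≤ x) (hy : 0 ≤ y) (hx' : 0 ≤ x') (hy' : 0 ≤ y') (hsum : x' + y' = x + y) :
    f x' * f y' * P x * P y - f x * f y * P x' * P y' = 0 := by
  have hgibbs : exp (b * x') * exp (b * y') = exp (b * x) * exp (b * y) := by
    rw [← exp_add, ← exp_add, ← mul_add, ← mul_add, hsum]
  rw [hf x hx, hf y hy, hf x' hx', hf y' hy']
  linear_combination (c ^ 2 * P x * P y * P x' * P y') * hgibbs

theorem hasDerivAt_log_one_div_one_sub {u : ℝ} (hu : u < 1) :
    HasDerivAt (fun ξ => log (1 / (1 - ξ))) (1 / (1 - u)) u := by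
  have h : HasDerivAt (fun ξ => -log (1 - ξ)) (-(-1 / (1 - u))) u :=
    (((hasDerivAt_id u).const_sub 1).log (sub_pos.mpr hu).ne').neg
  rw [neg_div, neg_neg] at h
  exact h.congr_of_eventuallyEq (Eventually.of_forall fun ξ => by simp [log_inv])

theorem eq_gibbs_mul_exclusion {a α u v w : ℝ} (ha : 0 < a) (hα : 0 ≤ α) (hu : u < 1)
    (hv : v = (1 - u) / (a + α * (1 - u))) (hw : w = a * log (1 / (1 - u)) + α * u) :
    v = exp (α / a) / a * exp (-a⁻¹ * w) * ((1 - α * v) * exp (-(α * v / (1 - α * v)))) := by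
  have ht : 0 < 1 - u := by linarith
  have hden : 0 < a + α * (1 - u) := by positivity
  have hexcl : 1 - α * v = a / (a + α * (1 - u)) := by
    rw [hv]; field_simp; ring
  have hratio : α * v / (1 - α * v) = α * (1 - u) / a := by
    rw [hexcl, hv]; field_simp
  have hweight : -a⁻¹ * w = log (1 - u) + -(α * u / a) := by
    rw [hw, one_div, log_inv]; field_simp; ring
  have hexp : exp (α / a) * exp (-(α * u / a)) * exp (-(α * (1 - u) / a)) = 1 := by
    rw [← exp_add, ← exp_add]
    convert exp_zero using 2
    field_simp
    ring
  rw [hratio, hexcl, hweight, exp_add, exp_log ht, hv]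
  calc (1 - u) / (a + α * (1 - u))
      = (1 - u) / (a + α * (1 - u))
        * (exp (α / a) * exp (-(α * u / a)) * exp (-(α * (1 - u) / a))) := by
          rw [hexp, mul_one]
    _ = _ := by field_simp

/-- The equilibrium density `f_α` is a stationary solution of the limiting Boltzmann
equation with exclusion: `Q[f_α](x) = 0` for every `x ≥ 0`, where
`x' = (1-ξ)(x+y)/2`, `y' = (1+ξ)(x+y)/2` and `Π(u) = (1-u)exp(-u/(1-u))`. -/
theorem stmt_17 (α : ℝ) (hα : α ∈ Set.Ioo (0 : ℝ) 2)
    (φ : ℝ → ℝ) (hφ : ∀ ξ, φ ξ = (1 - α / 2) * Real.log (1 / (1 - ξ)) + α * ξ)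
    (F : ℝ → ℝ) (hF : ∀ x ∈ Set.Ici (0 : ℝ), F x ∈ Set.Ico (0 : ℝ) 1 ∧ φ (F x) = x)
    (f : ℝ → ℝ) (hf : ∀ x, f x = 1 / deriv φ (F x))
    (Pex : ℝ → ℝ) (hPex : ∀ u, Pex u = (1 - u) * Real.exp (-(u / (1 - u)))) :
    ∀ x : ℝ, 0 ≤ x →
      (1 / 2) * (∫ y in Set.Ici (0 : ℝ), (∫ ξ in Set.Icc (-1 : ℝ) 1,
        (f ((1 - ξ) * (x + y) / 2) * f ((1 + ξ) * (x + y) / 2)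
            * Pex (α * f x) * Pex (α * f y)
          - f x * f y * Pex (α * f ((1 - ξ) * (x + y) / 2))
            * Pex (α * f ((1 + ξ) * (x + y) / 2))))) = 0 := by
  obtain ⟨hα0, hα2⟩ := hα
  have hgibbs : ∀ z, 0 ≤ z → f z = exp (α / (1 - α / 2)) / (1 - α / 2)
      * exp (-(1 - α / 2)⁻¹ * z) * Pex (α * f z) := by
    intro z hz
    obtain ⟨⟨-, hu⟩, hφz⟩ := hF z hz
    have hderiv : deriv φ (F z) = (1 - α / 2) * (1 / (1 - F z)) + α * 1 := by
      rw [funext hφ]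
      exact (((hasDerivAt_log_one_div_one_sub hu).const_mul _).add
        ((hasDerivAt_id _).const_mul α)).deriv
    rw [hPex]
    exact eq_gibbs_mul_exclusion (by linarith) hα0.le hu
      (by rw [hf, hderiv]; field_simp [(sub_pos.mpr hu).ne']) (hφz.symm.trans (hφ _))
  intro x hx
  rw [setIntegral_eq_zero_of_forall_eq_zero fun y hy =>
    setIntegral_eq_zero_of_forall_eq_zero fun ξ hξ => ?_, mul_zero]
  have hy : (0 : ℝ) ≤ y := hy
  obtain ⟨hξ1, hξ2⟩ := hξ
  exact collision_integrand_eq_zero (P := fun z => Pex (α * f z)) hgibbs hx hy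
    (by nlinarith) (by nlinarith) (by ring)
end

section
/- Let α ∈ (0,2) and let g : [0,∞) → ℝ be measurable with 0 < α g(x) < 1 for all x ≥ 0. With Π, x', y' and R_g defined as for the collision operator, assume ∫_0^∞ ∫_0^∞ ∫_{-1}^1 (1 + |s_g(x)| + |s_g(y)| + |s_g(x')| + |s_g(y')|) |R_g(x,y,ξ)| dξ dy dx < ∞, where s_g(x) = log( α g(x)/(1 - α g(x)) ) + α g(x)/(1 - α g(x)), and let Q[g](x) = (1/2) ∫_0^∞ ∫_{-1}^1 R_g(x,y,ξ) dξ dy. Then ∫_0^∞ Q[g](x) · s_g(x) dx ≤ 0. -/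
open MeasureTheory Filter Set

/-!
With `u = α g`, the weight `Π` and `s_g` satisfy `u = Π(u) e^{s_g}`, so
`α² R_g = Π(αg(x)) Π(αg(y)) Π(αg(x')) Π(αg(y')) (e^{s_g(x') + s_g(y')} - e^{s_g(x) + s_g(y)})`.
Moreover `R_g` is symmetric under `x ↔ y` and changes sign under the collision map
`(x, y, ξ) ↦ (x', y', (y - x)/(x + y))`, an involution of `(0,∞)² × (-1,1)` with Jacobian `-1`.
These two changes of variables give the weak form
`∫ s_g(x) R_g = ¼ ∫ (s_g(x) + s_g(y) - s_g(x') - s_g(y')) R_g`, whose integrand is pointwise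
nonpositive because `exp` is monotone; by Fubini the left side is `2 ∫ Q[g] s_g`.
-/

noncomputable section

def prodThreeEquivFin : (ℝ × ℝ × ℝ) ≃ₗ[ℝ] (Fin 3 → ℝ) where
  toFun p := ![p.1, p.2.1, p.2.2]
  invFun v := (v 0, v 1, v 2)
  map_add' p q := by funext i; fin_cases i <;> simp
  map_smul' c p := by funext i; fin_cases i <;> simp
  left_inv p := by simp
  right_inv v := by funext i; fin_cases i <;> simp

theorem ContinuousLinearMap.det_prodThree (f : (ℝ × ℝ × ℝ) →L[ℝ] (ℝ × ℝ × ℝ)) :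
    f.det = Matrix.det !![(f (1, 0, 0)).1, (f (0, 1, 0)).1, (f (0, 0, 1)).1;
                          (f (1, 0, 0)).2.1, (f (0, 1, 0)).2.1, (f (0, 0, 1)).2.1;
                          (f (1, 0, 0)).2.2, (f (0, 1, 0)).2.2, (f (0, 0, 1)).2.2] := by
  rw [ContinuousLinearMap.det, ← LinearMap.det_toMatrix (Module.Basis.ofEquivFun prodThreeEquivFin)]
  congr 1
  ext i j
  fin_cases i <;> fin_cases j <;>
    simp [LinearMap.toMatrix_apply, prodThreeEquivFin]

theorem setIntegral_comp_eq_of_involutive {E F : Type*} [NormedAddCommGroup E] [NormedSpace ℝ E]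
    [FiniteDimensional ℝ E] [MeasurableSpace E] [BorelSpace E] [NormedAddCommGroup F]
    [NormedSpace ℝ F] (μ : Measure E) [μ.IsAddHaarMeasure] {s : Set E} (hs : MeasurableSet s)
    {f : E → E} {f' : E → E →L[ℝ] E} (hf' : ∀ x ∈ s, HasFDerivWithinAt f (f' x) s x)
    (hdet : ∀ x ∈ s, |(f' x).det| = 1) (hmaps : MapsTo f s s) (hinv : ∀ x ∈ s, f (f x) = x)
    (H : E → F) : ∫ x in s, H (f x) ∂μ = ∫ x in s, H x ∂μ := by
  have himage : f '' s = s :=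
    (hmaps.image_subset).antisymm fun x hx => ⟨f x, hmaps hx, hinv x hx⟩
  have hinj : InjOn f s := fun x hx y hy hxy => by rw [← hinv x hx, hxy, hinv y hy]
  conv_rhs => rw [← himage, integral_image_eq_integral_abs_det_fderiv_smul μ hs hf' hinj]
  exact setIntegral_congr_fun hs fun x hx => by rw [hdet x hx, one_smul]

def coordX : (ℝ × ℝ × ℝ) →L[ℝ] ℝ := ContinuousLinearMap.fst ℝ ℝ (ℝ × ℝ)

def coordY : (ℝ × ℝ × ℝ) →L[ℝ] ℝ :=
  (ContinuousLinearMap.fst ℝ ℝ ℝ).comp (ContinuousLinearMap.snd ℝ ℝ (ℝ × ℝ))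

def coordZ : (ℝ × ℝ × ℝ) →L[ℝ] ℝ :=
  (ContinuousLinearMap.snd ℝ ℝ ℝ).comp (ContinuousLinearMap.snd ℝ ℝ (ℝ × ℝ))

@[simp] theorem coordX_apply (p : ℝ × ℝ × ℝ) : coordX p = p.1 := rfl
@[simp] theorem coordY_apply (p : ℝ × ℝ × ℝ) : coordY p = p.2.1 := rfl
@[simp] theorem coordZ_apply (p : ℝ × ℝ × ℝ) : coordZ p = p.2.2 := rfl

def swapXY : (ℝ × ℝ × ℝ) →L[ℝ] (ℝ × ℝ × ℝ) := coordY.prod (coordX.prod coordZ)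

@[simp] theorem swapXY_apply (p : ℝ × ℝ × ℝ) : swapXY p = (p.2.1, p.1, p.2.2) := rfl

theorem det_swapXY : swapXY.det = -1 := by
  simp [ContinuousLinearMap.det_prodThree, Matrix.det_fin_three]

-- `ξ'` is the parameter with `x = (1 - ξ') (x' + y') / 2` and `y = (1 + ξ') (x' + y') / 2`,
-- which makes the map an involution.
def collisionMap (p : ℝ × ℝ × ℝ) : ℝ × ℝ × ℝ :=
  ((1 - p.2.2) * (p.1 + p.2.1) / 2, (1 + p.2.2) * (p.1 + p.2.1) / 2, (p.2.1 - p.1) / (p.1 + p.2.1))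

def collisionDomain : Set (ℝ × ℝ × ℝ) := Ioi 0 ×ˢ Ioi 0 ×ˢ Ioo (-1) 1

theorem mapsTo_collisionMap : MapsTo collisionMap collisionDomain collisionDomain := by
  rintro ⟨x, y, ξ⟩ ⟨hx, hy, hξ⟩
  simp only [collisionMap, collisionDomain, mem_prod, mem_Ioi, mem_Ioo] at *
  refine ⟨by nlinarith, by nlinarith, ?_, ?_⟩
  · rw [lt_div_iff₀ (by linarith)]; linarith
  · rw [div_lt_iff₀ (by linarith)]; linarith

theorem collisionMap_collisionMap {p : ℝ × ℝ × ℝ} (hp : p ∈ collisionDomain) :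
    collisionMap (collisionMap p) = p := by
  obtain ⟨x, y, ξ⟩ := p
  obtain ⟨hx, hy, -⟩ := hp
  have hxy : x + y ≠ 0 := by simp only [mem_Ioi] at hx hy; positivity
  simp only [collisionMap, Prod.mk.injEq]
  refine ⟨?_, ?_, ?_⟩ <;> field_simp <;> ring

def collisionMapDeriv (p : ℝ × ℝ × ℝ) : (ℝ × ℝ × ℝ) →L[ℝ] (ℝ × ℝ × ℝ) :=
  (((1 - p.2.2) / 2) • (coordX + coordY) - ((p.1 + p.2.1) / 2) • coordZ).prod
    ((((1 + p.2.2) / 2) • (coordX + coordY) + ((p.1 + p.2.1) / 2) • coordZ).prod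
      ((2 / (p.1 + p.2.1) ^ 2) • (p.1 • coordY - p.2.1 • coordX)))

theorem hasFDerivAt_collisionMap {p : ℝ × ℝ × ℝ} (hp : p.1 + p.2.1 ≠ 0) :
    HasFDerivAt collisionMap (collisionMapDeriv p) p := by
  have hX := coordX.hasFDerivAt (x := p)
  have hY := coordY.hasFDerivAt (x := p)
  have hZ := coordZ.hasFDerivAt (x := p)
  have hS := hX.add hY
  refine (((((hasFDerivAt_const 1 p).sub hZ).mul hS).mul_const (2⁻¹ : ℝ)).prodMk
    ((((hasFDerivAt_const 1 p).add hZ).mul hS).mul_const (2⁻¹ : ℝ) |>.prodMk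
      ((hY.sub hX).mul ((hasFDerivAt_inv hp).comp p hS)))).congr_fderiv ?_
  ext <;> simp [collisionMapDeriv] <;> field_simp <;> ring

theorem det_collisionMapDeriv {p : ℝ × ℝ × ℝ} (hp : p.1 + p.2.1 ≠ 0) :
    (collisionMapDeriv p).det = -1 := by
  rw [ContinuousLinearMap.det_prodThree, Matrix.det_fin_three]
  simp only [collisionMapDeriv, Matrix.of_apply, Matrix.cons_val', Matrix.cons_val_zero,
    Matrix.cons_val_one, Matrix.cons_val_fin_one, Matrix.cons_val, ContinuousLinearMap.prod_apply,
    add_apply, sub_apply, smul_apply, coordX_apply, coordY_apply, coordZ_apply, smul_eq_mul]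
  field_simp
  ring

-- `volume` on `ℝ × ℝ × ℝ` is `volume.prod volume` only after unfolding, which instance search
-- does not do.
instance : (volume : Measure (ℝ × ℝ × ℝ)).IsAddHaarMeasure :=
  Measure.prod.instIsAddHaarMeasure _ _

@[fun_prop]
theorem measurable_collisionMap : Measurable collisionMap := by
  unfold collisionMap; fun_prop

theorem measurableSet_collisionDomain : MeasurableSet collisionDomain :=
  measurableSet_Ioi.prod (measurableSet_Ioi.prod measurableSet_Ioo)

theorem setIntegral_comp_collisionMap {F : Type*} [NormedAddCommGroup F] [NormedSpace ℝ F]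
    (H : ℝ × ℝ × ℝ → F) :
    ∫ p in collisionDomain, H (collisionMap p) = ∫ p in collisionDomain, H p := by
  have hne : ∀ p ∈ collisionDomain, p.1 + p.2.1 ≠ 0 := fun p hp => by
    have : 0 < p.1 := hp.1; have : 0 < p.2.1 := hp.2.1; positivity
  refine setIntegral_comp_eq_of_involutive volume measurableSet_collisionDomain
    (fun p hp => (hasFDerivAt_collisionMap (hne p hp)).hasFDerivWithinAt) (fun p hp => ?_)
    mapsTo_collisionMap (fun p hp => collisionMap_collisionMap hp) H
  rw [det_collisionMapDeriv (hne p hp), abs_neg, abs_one]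

theorem setIntegral_comp_swapXY {F : Type*} [NormedAddCommGroup F] [NormedSpace ℝ F]
    (H : ℝ × ℝ × ℝ → F) :
    ∫ p in collisionDomain, H (swapXY p) = ∫ p in collisionDomain, H p := by
  refine setIntegral_comp_eq_of_involutive volume measurableSet_collisionDomain
    (fun p _ => swapXY.hasFDerivAt.hasFDerivWithinAt) (fun _ _ => by simp [det_swapXY])
    (fun p hp => ⟨hp.2.1, hp.1, hp.2.2⟩) (fun _ _ => rfl) H

theorem volume_restrict_closedBox :
    volume.restrict (Ici (0 : ℝ) ×ˢ Ici (0 : ℝ) ×ˢ Icc (-1 : ℝ) 1) =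
      volume.restrict collisionDomain := by
  simp only [collisionDomain, Measure.volume_eq_prod, ← Measure.prod_restrict,
    Measure.restrict_congr_set Ioi_ae_eq_Ici, Measure.restrict_congr_set Ioo_ae_eq_Icc]

theorem setIntegral_mul_eq_quarter_collision {φ : ℝ → ℝ} {F : ℝ × ℝ × ℝ → ℝ}
    (hF_swap : ∀ p, F (swapXY p) = F p)
    (hF_coll : ∀ p ∈ collisionDomain, F (collisionMap p) = -F p)
    (hx : IntegrableOn (fun p => φ p.1 * F p) collisionDomain)
    (hy : IntegrableOn (fun p => φ p.2.1 * F p) collisionDomain)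
    (hx' : IntegrableOn (fun p => φ (collisionMap p).1 * F p) collisionDomain)
    (hy' : IntegrableOn (fun p => φ (collisionMap p).2.1 * F p) collisionDomain) :
    ∫ p in collisionDomain, φ p.1 * F p = (1 / 4) * ∫ p in collisionDomain,
      (φ p.1 + φ p.2.1 - φ (collisionMap p).1 - φ (collisionMap p).2.1) * F p := by
  have hswap : ∫ p in collisionDomain, φ p.2.1 * F p = ∫ p in collisionDomain, φ p.1 * F p := by
    rw [← setIntegral_comp_swapXY fun p => φ p.1 * F p]
    exact setIntegral_congr_fun measurableSet_collisionDomain fun p _ => by rw [hF_swap]; rfl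
  have hcoll : ∫ p in collisionDomain, (φ (collisionMap p).1 + φ (collisionMap p).2.1) * F p =
      -∫ p in collisionDomain, (φ p.1 + φ p.2.1) * F p := by
    rw [← setIntegral_comp_collisionMap fun p => (φ p.1 + φ p.2.1) * F p, ← integral_neg]
    exact setIntegral_congr_fun measurableSet_collisionDomain fun p hp => by
      simp only [hF_coll p hp]; ring
  have hxy : IntegrableOn (fun p => (φ p.1 + φ p.2.1) * F p) collisionDomain :=
    (hx.add hy).congr_fun (fun p _ => (add_mul _ _ _).symm) measurableSet_collisionDomain
  have hxy' : IntegrableOn (fun p => (φ (collisionMap p).1 + φ (collisionMap p).2.1) * F p)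
      collisionDomain :=
    (hx'.add hy').congr_fun (fun p _ => (add_mul _ _ _).symm) measurableSet_collisionDomain
  have hsum : ∫ p in collisionDomain, (φ p.1 + φ p.2.1) * F p =
      2 * ∫ p in collisionDomain, φ p.1 * F p := by
    simp only [add_mul]
    rw [integral_add hx hy, hswap, two_mul]
  have hsplit : ∫ p in collisionDomain,
      (φ p.1 + φ p.2.1 - φ (collisionMap p).1 - φ (collisionMap p).2.1) * F p =
      ∫ p in collisionDomain, ((φ p.1 + φ p.2.1) * F p
        - (φ (collisionMap p).1 + φ (collisionMap p).2.1) * F p) :=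
    integral_congr_ae (ae_of_all _ fun p => by ring)
  rw [hsplit, integral_sub hxy hxy', hcoll, hsum]
  ring

theorem Integrable.mul_of_abs_le {X : Type*} [MeasurableSpace X] {μ : Measure X} {w ψ F : X → ℝ}
    (h : Integrable (fun x => w x * |F x|) μ) (hψ : AEStronglyMeasurable ψ μ)
    (hF : AEStronglyMeasurable F μ) (hle : ∀ x, |ψ x| ≤ w x) :
    Integrable (fun x => ψ x * F x) μ :=
  h.mono' (hψ.mul hF) <| ae_of_all _ fun x => by
    rw [Real.norm_eq_abs, abs_mul]
    exact mul_le_mul_of_nonneg_right (hle x) (abs_nonneg _)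

theorem setIntegral_prod_prod_mul_eq_iterated {X Y Z : Type*} [MeasureSpace X] [MeasureSpace Y]
    [MeasureSpace Z] [SFinite (volume : Measure X)] [SFinite (volume : Measure Y)]
    [SFinite (volume : Measure Z)]
    {A : Set X} {B : Set Y} {C : Set Z} {h : X → ℝ} {F : X → Y → Z → ℝ}
    (hi : IntegrableOn (fun p : X × Y × Z => h p.1 * F p.1 p.2.1 p.2.2) (A ×ˢ B ×ˢ C)) :
    ∫ x in A, h x * ∫ y in B, ∫ z in C, F x y z =
      ∫ p in A ×ˢ B ×ˢ C, h p.1 * F p.1 p.2.1 p.2.2 := by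
  have hμ : volume.restrict (A ×ˢ B ×ˢ C) =
      (volume.restrict A).prod ((volume.restrict B).prod (volume.restrict C)) := by
    rw [Measure.prod_restrict, Measure.prod_restrict]; rfl
  rw [IntegrableOn, hμ] at hi
  rw [hμ, integral_prod _ hi]
  refine integral_congr_ae ?_
  filter_upwards [hi.prod_right_ae] with x hx
  rw [integral_prod _ hx]
  simp_rw [integral_const_mul]

def exclusionWeight (u : ℝ) : ℝ := (1 - u) * Real.exp (-(u / (1 - u)))

def exclusionPotential (u : ℝ) : ℝ := Real.log (u / (1 - u)) + u / (1 - u)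

theorem exclusionWeight_pos {u : ℝ} (hu : u < 1) : 0 < exclusionWeight u :=
  mul_pos (by linarith) (Real.exp_pos _)

theorem exclusionWeight_mul_exp_exclusionPotential {u : ℝ} (hu : u ∈ Ioo 0 1) :
    exclusionWeight u * Real.exp (exclusionPotential u) = u := by
  have h1 : 0 < 1 - u := by linarith [hu.2]
  rw [exclusionWeight, exclusionPotential, Real.exp_add, Real.exp_log (div_pos hu.1 h1),
    Real.exp_neg]
  field_simp

@[fun_prop]
theorem measurable_exclusionWeight : Measurable exclusionWeight := by
  unfold exclusionWeight; fun_prop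

theorem measurable_exclusionPotential : Measurable exclusionPotential := by
  unfold exclusionPotential; fun_prop

theorem sub_mul_exp_sub_exp_nonpos (a b : ℝ) : (a - b) * (Real.exp b - Real.exp a) ≤ 0 := by
  have := (Real.exp_monotone.monovary monotone_id).sub_mul_sub_nonneg a b
  simp only [id] at this
  nlinarith

theorem exclusionPotential_sub_mul_gain_sub_loss_nonpos {α a b c d : ℝ}
    (ha : α * a ∈ Ioo 0 1) (hb : α * b ∈ Ioo 0 1) (hc : α * c ∈ Ioo 0 1) (hd : α * d ∈ Ioo 0 1) :
    (exclusionPotential (α * a) + exclusionPotential (α * b) - exclusionPotential (α * c)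
        - exclusionPotential (α * d)) *
      (c * d * exclusionWeight (α * a) * exclusionWeight (α * b)
        - a * b * exclusionWeight (α * c) * exclusionWeight (α * d)) ≤ 0 := by
  have hα : α ≠ 0 := by rintro rfl; simp at ha
  rw [sub_sub]
  set wa := exclusionWeight (α * a)
  set wb := exclusionWeight (α * b)
  set wc := exclusionWeight (α * c)
  set wd := exclusionWeight (α * d)
  set A := exclusionPotential (α * a) + exclusionPotential (α * b)
  set B := exclusionPotential (α * c) + exclusionPotential (α * d)
  have ea := exclusionWeight_mul_exp_exclusionPotential ha
  have eb := exclusionWeight_mul_exp_exclusionPotential hb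
  have ec := exclusionWeight_mul_exp_exclusionPotential hc
  have ed := exclusionWeight_mul_exp_exclusionPotential hd
  have hP : 0 < wa * wb * wc * wd := by
    have := exclusionWeight_pos ha.2; have := exclusionWeight_pos hb.2
    have := exclusionWeight_pos hc.2; have := exclusionWeight_pos hd.2
    positivity
  -- `α * a = wa * exp (exclusionPotential (α * a))`, and likewise for `b`, `c`, `d`.
  have key : α ^ 2 * (c * d * wa * wb - a * b * wc * wd) =
      wa * wb * wc * wd * (Real.exp B - Real.exp A) := by
    simp only [A, B, Real.exp_add]
    linear_combination (-(wa * wb * (α * d))) * ec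
      - wa * wb * (wc * Real.exp (exclusionPotential (α * c))) * ed
      + wc * wd * (α * b) * ea + wc * wd * (wa * Real.exp (exclusionPotential (α * a))) * eb
  refine nonpos_of_mul_nonpos_right ?_ (by positivity : 0 < α ^ 2)
  calc α ^ 2 * ((A - B) * (c * d * wa * wb - a * b * wc * wd))
      = wa * wb * wc * wd * ((A - B) * (Real.exp B - Real.exp A)) := by
        rw [mul_left_comm, key]; ring
    _ ≤ 0 := mul_nonpos_of_nonneg_of_nonpos hP.le (sub_mul_exp_sub_exp_nonpos A B)

-- The paper's `R_g(x, y, ξ)` at `p = (x, y, ξ)`.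
def collisionIntegrand (α : ℝ) (g : ℝ → ℝ) (p : ℝ × ℝ × ℝ) : ℝ :=
  g (collisionMap p).1 * g (collisionMap p).2.1 * exclusionWeight (α * g p.1)
      * exclusionWeight (α * g p.2.1)
    - g p.1 * g p.2.1 * exclusionWeight (α * g (collisionMap p).1)
      * exclusionWeight (α * g (collisionMap p).2.1)

variable {α : ℝ} {g : ℝ → ℝ}

theorem collisionIntegrand_swapXY (p : ℝ × ℝ × ℝ) :
    collisionIntegrand α g (swapXY p) = collisionIntegrand α g p := by
  simp only [collisionIntegrand, collisionMap, swapXY_apply, add_comm p.2.1 p.1]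
  ring

theorem collisionIntegrand_collisionMap {p : ℝ × ℝ × ℝ} (hp : p ∈ collisionDomain) :
    collisionIntegrand α g (collisionMap p) = -collisionIntegrand α g p := by
  rw [collisionIntegrand, collisionIntegrand, collisionMap_collisionMap hp]
  ring

theorem measurable_collisionIntegrand (hg : Measurable g) :
    Measurable (collisionIntegrand α g) := by
  unfold collisionIntegrand
  fun_prop

theorem exclusionPotential_sub_mul_collisionIntegrand_nonpos
    (hg : ∀ x, 0 < x → α * g x ∈ Ioo 0 1) {p : ℝ × ℝ × ℝ} (hp : p ∈ collisionDomain) :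
    (exclusionPotential (α * g p.1) + exclusionPotential (α * g p.2.1)
        - exclusionPotential (α * g (collisionMap p).1)
        - exclusionPotential (α * g (collisionMap p).2.1)) * collisionIntegrand α g p ≤ 0 := by
  have hp' := mapsTo_collisionMap hp
  exact exclusionPotential_sub_mul_gain_sub_loss_nonpos (hg _ hp.1) (hg _ hp.2.1) (hg _ hp'.1)
    (hg _ hp'.2.1)

theorem setIntegral_exclusionPotential_mul_collisionIntegrand_nonpos (hgm : Measurable g)
    (hg : ∀ x, 0 < x → α * g x ∈ Ioo 0 1)
    (hint : IntegrableOn (fun p => (1 + |exclusionPotential (α * g p.1)|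
      + |exclusionPotential (α * g p.2.1)| + |exclusionPotential (α * g (collisionMap p).1)|
      + |exclusionPotential (α * g (collisionMap p).2.1)|) * |collisionIntegrand α g p|)
      collisionDomain) :
    ∫ p in collisionDomain, exclusionPotential (α * g p.1) * collisionIntegrand α g p ≤ 0 := by
  have hφ (f : ℝ × ℝ × ℝ → ℝ) (hf : Measurable f) : AEStronglyMeasurable
      (fun p => exclusionPotential (α * g (f p))) (volume.restrict collisionDomain) :=
    (measurable_exclusionPotential.comp ((hgm.comp hf).const_mul α)).aestronglyMeasurable
  have hC : AEStronglyMeasurable (collisionIntegrand α g) (volume.restrict collisionDomain) :=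
    (measurable_collisionIntegrand hgm).aestronglyMeasurable
  have hx := Integrable.mul_of_abs_le hint (hφ (fun p => p.1) (by fun_prop)) hC
    fun p => by grind only [abs_nonneg]
  have hy := Integrable.mul_of_abs_le hint (hφ (fun p => p.2.1) (by fun_prop)) hC
    fun p => by grind only [abs_nonneg]
  have hx' := Integrable.mul_of_abs_le hint (hφ (fun p => (collisionMap p).1) (by fun_prop)) hC
    fun p => by grind only [abs_nonneg]
  have hy' := Integrable.mul_of_abs_le hint (hφ (fun p => (collisionMap p).2.1) (by fun_prop)) hC
    fun p => by grind only [abs_nonneg]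
  rw [setIntegral_mul_eq_quarter_collision (φ := fun x => exclusionPotential (α * g x))
    collisionIntegrand_swapXY (fun p hp => collisionIntegrand_collisionMap hp) hx hy hx' hy']
  exact mul_nonpos_of_nonneg_of_nonpos (by norm_num) <|
    setIntegral_nonpos measurableSet_collisionDomain fun p hp =>
      exclusionPotential_sub_mul_collisionIntegrand_nonpos hg hp

theorem setIntegral_collisionOperator_mul_exclusionPotential_nonpos (hgm : Measurable g)
    (hg : ∀ x, 0 < x → α * g x ∈ Ioo 0 1)
    (hint : IntegrableOn (fun p => (1 + |exclusionPotential (α * g p.1)|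
      + |exclusionPotential (α * g p.2.1)| + |exclusionPotential (α * g (collisionMap p).1)|
      + |exclusionPotential (α * g (collisionMap p).2.1)|) * |collisionIntegrand α g p|)
      (Ici 0 ×ˢ Ici 0 ×ˢ Icc (-1) 1)) :
    ∫ x in Ici 0, (1 / 2 * ∫ y in Ici 0, ∫ ξ in Icc (-1) 1, collisionIntegrand α g (x, y, ξ))
      * exclusionPotential (α * g x) ≤ 0 := by
  rw [IntegrableOn, volume_restrict_closedBox] at hint
  have hφ : Measurable fun x => exclusionPotential (α * g x) :=
    measurable_exclusionPotential.comp (hgm.const_mul α)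
  have hx := Integrable.mul_of_abs_le hint (hφ.comp measurable_fst).aestronglyMeasurable
    (measurable_collisionIntegrand hgm).aestronglyMeasurable fun p => by grind only [abs_nonneg]
  calc ∫ x in Ici 0, (1 / 2 * ∫ y in Ici 0, ∫ ξ in Icc (-1) 1, collisionIntegrand α g (x, y, ξ))
        * exclusionPotential (α * g x)
      = 1 / 2 * ∫ x in Ici 0, exclusionPotential (α * g x)
          * ∫ y in Ici 0, ∫ ξ in Icc (-1) 1, collisionIntegrand α g (x, y, ξ) := by
        rw [← integral_const_mul]
        exact integral_congr_ae (ae_of_all _ fun x => by ring)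
    _ = 1 / 2 * ∫ p in collisionDomain,
          exclusionPotential (α * g p.1) * collisionIntegrand α g p := by
        rw [setIntegral_prod_prod_mul_eq_iterated, volume_restrict_closedBox]
        rwa [IntegrableOn, volume_restrict_closedBox]
    _ ≤ 0 := mul_nonpos_of_nonneg_of_nonpos (by norm_num)
        (setIntegral_exclusionPotential_mul_collisionIntegrand_nonpos hgm hg hint)

end

theorem stmt_18_general (α : ℝ)
    (g : ℝ → ℝ) (hgm : Measurable g)
    (hg : ∀ x : ℝ, 0 ≤ x → 0 < α * g x ∧ α * g x < 1)
    (Pex : ℝ → ℝ) (hPex : ∀ u, Pex u = (1 - u) * Real.exp (-(u / (1 - u))))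
    (R : ℝ → ℝ → ℝ → ℝ)
    (hR : ∀ x y ξ, R x y ξ =
      g ((1 - ξ) * (x + y) / 2) * g ((1 + ξ) * (x + y) / 2) * Pex (α * g x) * Pex (α * g y)
      - g x * g y * Pex (α * g ((1 - ξ) * (x + y) / 2)) * Pex (α * g ((1 + ξ) * (x + y) / 2)))
    (s : ℝ → ℝ)
    (hs : ∀ x, s x = Real.log (α * g x / (1 - α * g x)) + α * g x / (1 - α * g x))
    (hint : MeasureTheory.Integrable
      (fun p : ℝ × ℝ × ℝ =>
        (1 + |s p.1| + |s p.2.1| + |s ((1 - p.2.2) * (p.1 + p.2.1) / 2)|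
          + |s ((1 + p.2.2) * (p.1 + p.2.1) / 2)|) * |R p.1 p.2.1 p.2.2|)
      (MeasureTheory.volume.restrict
        ((Set.Ici (0 : ℝ)) ×ˢ (Set.Ici (0 : ℝ)) ×ˢ (Set.Icc (-1 : ℝ) 1))))
    (Q : ℝ → ℝ)
    (hQ : ∀ x, Q x = (1 / 2) *
      ∫ y in Set.Ici (0 : ℝ), (∫ ξ in Set.Icc (-1 : ℝ) 1, R x y ξ)) :
    (∫ x in Set.Ici (0 : ℝ), Q x * s x) ≤ 0 := by
  obtain rfl : Pex = exclusionWeight := funext hPex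
  have hs' (x : ℝ) : s x = exclusionPotential (α * g x) := hs x
  have hR' (x y ξ : ℝ) : R x y ξ = collisionIntegrand α g (x, y, ξ) := hR x y ξ
  simp only [hs', hR', Prod.mk.eta] at hint
  simp only [hQ, hs', hR']
  exact setIntegral_collisionOperator_mul_exclusionPotential_nonpos hgm
    (fun x hx => hg x hx.le) hint

/-- Entropy dissipation for the limiting Boltzmann equation with exclusion:
with `s_g(x) = log(αg(x)/(1-αg(x))) + αg(x)/(1-αg(x))`,
one has `∫₀^∞ Q[g](x) s_g(x) dx ≤ 0`. -/
theorem stmt_18 (α : ℝ) (hα : α ∈ Set.Ioo (0 : ℝ) 2)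
    (g : ℝ → ℝ) (hgm : Measurable g)
    (hg : ∀ x : ℝ, 0 ≤ x → 0 < α * g x ∧ α * g x < 1)
    (Pex : ℝ → ℝ) (hPex : ∀ u, Pex u = (1 - u) * Real.exp (-(u / (1 - u))))
    (R : ℝ → ℝ → ℝ → ℝ)
    (hR : ∀ x y ξ, R x y ξ =
      g ((1 - ξ) * (x + y) / 2) * g ((1 + ξ) * (x + y) / 2) * Pex (α * g x) * Pex (α * g y)
      - g x * g y * Pex (α * g ((1 - ξ) * (x + y) / 2)) * Pex (α * g ((1 + ξ) * (x + y) / 2)))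
    (s : ℝ → ℝ)
    (hs : ∀ x, s x = Real.log (α * g x / (1 - α * g x)) + α * g x / (1 - α * g x))
    (hint : MeasureTheory.Integrable
      (fun p : ℝ × ℝ × ℝ =>
        (1 + |s p.1| + |s p.2.1| + |s ((1 - p.2.2) * (p.1 + p.2.1) / 2)|
          + |s ((1 + p.2.2) * (p.1 + p.2.1) / 2)|) * |R p.1 p.2.1 p.2.2|)
      (MeasureTheory.volume.restrict
        ((Set.Ici (0 : ℝ)) ×ˢ (Set.Ici (0 : ℝ)) ×ˢ (Set.Icc (-1 : ℝ) 1))))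
    (Q : ℝ → ℝ)
    (hQ : ∀ x, Q x = (1 / 2) *
      ∫ y in Set.Ici (0 : ℝ), (∫ ξ in Set.Icc (-1 : ℝ) 1, R x y ξ)) :
    (∫ x in Set.Ici (0 : ℝ), Q x * s x) ≤ 0 :=
  stmt_18_general α g hgm hg Pex hPex R hR s hs hint Q hQ
end
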